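/- arXiv:2211.15917 — 11 statements merged into one kernel-verified Lean document; each statement's English description precedes it below -/
import Mathlib

section
/- Let S be a skeleton with head e in a nonzero real vector space X, and let S₀ = S \ {0, e}. Then no element of S₀ is of the form αe with α ∈ [0,1]; that is, S₀ ∩ [0,1]e = ∅. -/
open Set

/-- A *skeleton* with head `e` in a real vector space `X`. -/
structure IsSkeleton {X : Type*} [AddCommGroup X] [Module ℝ X] (S : Set X) (e : X) : Prop where
  head_ne : e ≠ 0
  zero_mem : (0 : X) ∈ S
  head_mem : e ∈ S
  compl_mem : ∀ u ∈ S, e - u ∈ S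
  comb : ∀ u ∈ S, ∀ v ∈ S, ∀ l : ℝ, 0 ≤ l → l ≤ 1 →
    ∃ w ∈ S \ {0, e}, ∃ a b : ℝ, 0 ≤ a ∧ 0 ≤ b ∧
      l • u + (1 - l) • v = a • e + b • w
  head_sum : ∀ n : ℕ, 2 ≤ n → ∀ u : Fin n → X, ∀ a : Fin n → ℝ,
    (∀ i, u i ∈ S \ {0, e}) → (∀ i, 0 < a i) →
    e = ∑ i, a i • u i → ∀ j, 1 ≤ ∑ i ∈ Finset.univ.erase j, a i

theorem skeleton_periphery_disjoint_segment
    {X : Type*} [AddCommGroup X] [Module ℝ X] {S : Set X} {e : X}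
    (h : IsSkeleton S e) :
    (S \ {0, e}) ∩ {x : X | ∃ a ∈ Set.Icc (0:ℝ) 1, x = a • e} = ∅ := by
  ext x
  simp only [mem_inter_iff, mem_diff, mem_setOf_eq, mem_empty_iff_false, iff_false,
    Set.mem_insert_iff, Set.mem_singleton_iff, not_or]
  rintro ⟨⟨hxS, hx0, hxe⟩, a, ⟨ha0, ha1⟩, rfl⟩
  have he := h.head_ne
  have ha0' : a ≠ 0 := by rintro rfl; exact hx0 (by simp)
  have ha1' : a ≠ 1 := by rintro rfl; exact hxe (by simp)
  have hapos : 0 < a := lt_of_le_of_ne ha0 (Ne.symm ha0')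
  have halt : a < 1 := lt_of_le_of_ne ha1 ha1'
  have hw'eq : e - a • e = (1 - a) • e := by rw [sub_smul, one_smul]
  have hw'S : e - a • e ∈ S := h.compl_mem _ hxS
  have hw'0 : e - a • e ≠ 0 := by
    rw [hw'eq]
    simp only [ne_eq, smul_eq_zero, not_or]
    exact ⟨by linarith, he⟩
  have hw'e : e - a • e ≠ e := by
    intro hc
    have : a • e = 0 := by linear_combination (norm := abel) -hc
    exact hx0 this
  set u : Fin 2 → X := ![a • e, e - a • e] with hu
  set c : Fin 2 → ℝ := ![1/2, (1 - a/2)/(1-a)] with hc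
  have hmem : ∀ i, u i ∈ S \ {0, e} := by
    intro i
    fin_cases i <;>
      simp only [hu, Matrix.cons_val_zero, Matrix.cons_val_one, Matrix.head_cons, mem_diff,
        Set.mem_insert_iff, Set.mem_singleton_iff, not_or]
    · exact ⟨hxS, hx0, hxe⟩
    · exact ⟨hw'S, hw'0, hw'e⟩
  have hpos : ∀ i, 0 < c i := by
    intro i
    fin_cases i <;> simp only [hc, Matrix.cons_val_zero, Matrix.cons_val_one, Matrix.head_cons]
    · norm_num
    · exact div_pos (by linarith) (by linarith)
  have hsum : e = ∑ i, c i • u i := by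
    rw [Fin.sum_univ_two]
    simp only [hc, hu, Matrix.cons_val_zero, Matrix.cons_val_one, Matrix.head_cons, hw'eq,
      smul_smul]
    rw [← add_smul]
    have h1a : (1:ℝ) - a ≠ 0 := by linarith
    have : 1/2 * a + (1 - a/2)/(1-a) * (1-a) = 1 := by
      field_simp
      ring
    rw [this, one_smul]
  have := h.head_sum 2 le_rfl u c hmem hpos hsum 1
  have herase : (Finset.univ.erase (1 : Fin 2)) = {0} := by decide
  rw [herase, Finset.sum_singleton] at this
  simp only [hc, Matrix.cons_val_zero] at this
  linarith
end

section
/- Let S be a skeleton with head e in a nonzero real vector space, with periphery S₀ = S \ {0,e}. If u, v ∈ S₀ and e = αu + βv for some α, β ≥ 0, then α = 1 and β = 1. -/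
open Set

lemma skeleton_two_rep
    {X : Type*} [AddCommGroup X] [Module ℝ X] {S : Set X} {e : X}
    (h : IsSkeleton S e) {u v : X} (hu : u ∈ S \ {0, e}) (hv : v ∈ S \ {0, e})
    {a b : ℝ} (ha : 0 < a) (hb : 0 < b) (he : e = a • u + b • v) :
    1 ≤ a ∧ 1 ≤ b := by
  have hsum := h.head_sum 2 le_rfl ![u, v] ![a, b]
    (by intro i; fin_cases i; exacts [hu, hv])
    (by intro i; fin_cases i <;> simp [ha, hb])
    (by simpa [Fin.sum_univ_two] using he)
  have h0 : (Finset.univ.erase (0 : Fin 2)) = {1} := by decide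
  have h1 : (Finset.univ.erase (1 : Fin 2)) = {0} := by decide
  have hb1 := hsum 0
  have ha1 := hsum 1
  rw [h0, Finset.sum_singleton] at hb1
  rw [h1, Finset.sum_singleton] at ha1
  exact ⟨by simpa using ha1, by simpa using hb1⟩

theorem skeleton_head_two_sum
    {X : Type*} [AddCommGroup X] [Module ℝ X] {S : Set X} {e : X}
    (h : IsSkeleton S e) {u v : X} (hu : u ∈ S \ {0, e}) (hv : v ∈ S \ {0, e})
    {a b : ℝ} (ha : 0 ≤ a) (hb : 0 ≤ b) (he : e = a • u + b • v) :
    a = 1 ∧ b = 1 := by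
  -- First rule out a = 0 and b = 0.
  have degen : ∀ w : X, w ∈ S \ {0, e} → ∀ c : ℝ, 0 ≤ c → e = c • w → False := by
    intro w hw c hc hec
    have hc0 : c ≠ 0 := by
      rintro rfl; exact h.head_ne (by simpa using hec)
    have hcpos : 0 < c := lt_of_le_of_ne hc (Ne.symm hc0)
    have h2 : e = (c / 2) • w + (c / 2) • w := by
      rw [← add_smul]; rw [hec]; ring_nf
    have hge2 := (skeleton_two_rep h hw hw (by positivity) (by positivity) h2).1
    have hcge2 : 2 ≤ c := by linarith
    have h3 : e = (c - 1 / 2) • w + (1 / 2 : ℝ) • w := by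
      rw [← add_smul]; rw [hec]; ring_nf
    have := (skeleton_two_rep h hw hw (by linarith) (by norm_num) h3).2
    linarith
  rcases eq_or_lt_of_le ha with rfl | hapos
  · exact (degen v hv b hb (by simpa using he)).elim
  rcases eq_or_lt_of_le hb with rfl | hbpos
  · exact (degen u hu a ha (by simpa using he)).elim
  obtain ⟨ha1, hb1⟩ := skeleton_two_rep h hu hv hapos hbpos he
  -- Now the complements.
  obtain ⟨huS, hu2⟩ := hu
  obtain ⟨hvS, hv2⟩ := hv
  simp only [mem_insert_iff, mem_singleton_iff, not_or] at hu2 hv2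
  have hu' : e - u ∈ S \ {0, e} := by
    refine ⟨h.compl_mem u huS, ?_⟩
    simp only [mem_insert_iff, mem_singleton_iff, not_or, sub_eq_zero, sub_eq_self]
    exact ⟨fun hh => hu2.2 hh.symm, hu2.1⟩
  have hv' : e - v ∈ S \ {0, e} := by
    refine ⟨h.compl_mem v hvS, ?_⟩
    simp only [mem_insert_iff, mem_singleton_iff, not_or, sub_eq_zero, sub_eq_self]
    exact ⟨fun hh => hv2.2 hh.symm, hv2.1⟩
  set c : ℝ := a + b - 1 with hcdef
  have hcpos : 0 < c := by simp only [hcdef]; linarith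
  have key : c • e = a • (e - u) + b • (e - v) := by
    have : a • (e - u) + b • (e - v) = (a + b) • e - (a • u + b • v) := by
      simp [smul_sub, add_smul]; abel
    rw [this, ← he, hcdef, sub_smul, one_smul]
  have he' : e = (a / c) • (e - u) + (b / c) • (e - v) := by
    rw [div_eq_inv_mul, div_eq_inv_mul, mul_smul, mul_smul, ← smul_add, ← key, smul_smul,
      inv_mul_cancel₀ hcpos.ne', one_smul]
  obtain ⟨hA, hB⟩ := skeleton_two_rep h hu' hv' (by positivity) (by positivity) he'
  rw [le_div_iff₀ hcpos, one_mul] at hA hB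
  constructor <;> [skip; skip] <;> (simp only [hcdef] at hA hB; linarith)
end

section
/- Let S be a skeleton with head e and periphery S₀. If u, v ∈ S₀ and αu = βv for real scalars α, β with αβ > 0, then u = v. -/
/-!
If `a • u = b • v` with `a, b > 0`, then `e = (b / a) • v + (e - u)` writes the head as a
two-term positive combination of periphery elements (`e - u` is in the periphery by the
complement axiom), so the head axiom forces `b / a ≥ 1`. By symmetry `a / b ≥ 1`, hence
`a = b`; the case `a, b < 0` reduces to this one by negating both scalars.
-/

open Set

namespace IsSkeleton

variable {X : Type*} [AddCommGroup X] [Module ℝ X] {S : Set X} {e : X}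

theorem sub_mem_periphery (h : IsSkeleton S e) {u : X} (hu : u ∈ S \ {0, e}) :
    e - u ∈ S \ {0, e} := by
  simp only [mem_sdiff, mem_insert_iff, mem_singleton_iff, not_or] at hu ⊢
  refine ⟨h.compl_mem u hu.1, fun h0 => hu.2.2 (sub_eq_zero.1 h0).symm, fun he => hu.2.1 ?_⟩
  simpa using he

theorem one_le_of_eq_smul_add (h : IsSkeleton S e) {p q : X} (hp : p ∈ S \ {0, e})
    (hq : q ∈ S \ {0, e}) {c : ℝ} (hc : 0 < c) (he : e = c • p + q) : 1 ≤ c := by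
  have key := h.head_sum 2 le_rfl ![p, q] ![c, 1]
    (fun i => by fin_cases i <;> assumption)
    (fun i => by fin_cases i <;> simp [hc])
    (by simp [Fin.sum_univ_two, he]) 1
  have herase : Finset.univ.erase (1 : Fin 2) = {0} := by decide
  simpa [herase] using key

theorem le_of_smul_eq_smul (h : IsSkeleton S e) {u v : X} (hu : u ∈ S \ {0, e})
    (hv : v ∈ S \ {0, e}) {a b : ℝ} (ha : 0 < a) (hb : 0 < b) (heq : a • u = b • v) :
    a ≤ b := by
  have hu_eq : u = (b / a) • v := by
    rw [div_eq_inv_mul, ← smul_smul, ← heq, smul_smul, inv_mul_cancel₀ ha.ne', one_smul]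
  have h1 : 1 ≤ b / a :=
    h.one_le_of_eq_smul_add hv (h.sub_mem_periphery hu) (div_pos hb ha)
      (by rw [← hu_eq]; abel)
  rwa [one_le_div ha] at h1

end IsSkeleton

theorem skeleton_smul_eq
    {X : Type*} [AddCommGroup X] [Module ℝ X] {S : Set X} {e : X}
    (h : IsSkeleton S e) {u v : X} (hu : u ∈ S \ {0, e}) (hv : v ∈ S \ {0, e})
    {a b : ℝ} (hab : a * b > 0) (heq : a • u = b • v) :
    u = v := by
  wlog hpos : 0 < a ∧ 0 < b generalizing a b
  · have hneg : a < 0 ∧ b < 0 := by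
      rcases mul_pos_iff.1 hab with hp | hn
      exacts [absurd hp hpos, hn]
    exact this (a := -a) (b := -b) (by simpa using hab) (by simp [heq])
      ⟨neg_pos.2 hneg.1, neg_pos.2 hneg.2⟩
  obtain ⟨ha, hb⟩ := hpos
  have hba : a = b :=
    le_antisymm (h.le_of_smul_eq_smul hu hv ha hb heq) (h.le_of_smul_eq_smul hv hu hb ha heq.symm)
  subst hba
  exact smul_right_injective X ha.ne' heq
end

section
/- Let S be a skeleton with head e and periphery S₀. If u₁, …, uₙ are distinct elements of S₀ and α₀, α₁, …, αₙ ≥ 0 satisfy α₀e + Σᵢ₌₁ⁿ αᵢuᵢ = 0, then αᵢ = 0 for all i = 0, 1, …, n. -/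
open Set

theorem skeleton_nonneg_comb_zero
    {X : Type*} [AddCommGroup X] [Module ℝ X] {S : Set X} {e : X}
    (h : IsSkeleton S e) {n : ℕ} {u : Fin n → X} (huinj : Function.Injective u)
    (hu : ∀ i, u i ∈ S \ {0, e}) {a0 : ℝ} {a : Fin n → ℝ}
    (ha0 : 0 ≤ a0) (ha : ∀ i, 0 ≤ a i)
    (hsum : a0 • e + ∑ i, a i • u i = 0) :
    a0 = 0 ∧ ∀ i, a i = 0 := by
  have key : ∀ i, a i = 0 := by
    by_contra hk
    push_neg at hk
    obtain ⟨i0, hi0⟩ := hk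
    have hi0' : 0 < a i0 := lt_of_le_of_ne (ha i0) (Ne.symm hi0)
    classical
    set P : Finset (Fin n) := Finset.univ.filter (fun i => 0 < a i) with hP
    have hi0P : i0 ∈ P := by simp [hP, hi0']
    set A : ℝ := ∑ i, a i with hA
    set c : ℝ := a0 + A with hc
    have hApos : 0 < A := by
      have := Finset.single_le_sum (f := a) (fun i _ => ha i) (Finset.mem_univ i0)
      linarith
    have hcpos : 0 < c := by positivity
    have hAc : A ≤ c := by simp [hc, ha0]
    -- the key identity
    have hid : ∑ i ∈ P, a i • (e - u i) = c • e := by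
      have h1 : ∑ i ∈ P, a i • (e - u i) = ∑ i, a i • (e - u i) := by
        refine Finset.sum_subset (Finset.subset_univ _) ?_
        intro i _ hiP
        have : a i = 0 := by
          by_contra hne
          exact hiP (by simp [hP, lt_of_le_of_ne (ha i) (Ne.symm hne)])
        simp [this]
      have h2 : ∑ i, a i • u i = -(a0 • e) := by
        rw [eq_neg_iff_add_eq_zero, add_comm]; exact hsum
      rw [h1]
      simp only [smul_sub]
      rw [Finset.sum_sub_distrib, h2, ← Finset.sum_smul, ← hA, hc, add_smul]
      abel
    set m : ℕ := P.card with hm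
    have hmpos : 0 < m := Finset.card_pos.mpr ⟨i0, hi0P⟩
    set f : Fin m → Fin n := fun k => ((P.equivFin.symm k : {x // x ∈ P}) : Fin n) with hf
    have hfP : ∀ k, f k ∈ P := fun k => (P.equivFin.symm k).2
    have hfsum : ∀ (F : Fin n → X), ∑ k : Fin m, F (f k) = ∑ i ∈ P, F i := by
      intro F
      rw [← Finset.sum_attach P F]
      exact (Fintype.sum_equiv P.equivFin (fun x => F x) (fun k => F (f k))
        (fun x => by simp [hf])).symm
    have hfsum' : ∀ (F : Fin n → ℝ), ∑ k : Fin m, F (f k) = ∑ i ∈ P, F i := by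
      intro F
      rw [← Finset.sum_attach P F]
      exact (Fintype.sum_equiv P.equivFin (fun x => F x) (fun k => F (f k))
        (fun x => by simp [hf])).symm
    -- doubled family
    set g : Fin (m + m) → Fin n := fun k =>
      f (if hk : (k : ℕ) < m then ⟨k, hk⟩ else ⟨(k : ℕ) - m, by omega⟩) with hg
    have hgP : ∀ k, g k ∈ P := fun k => hfP _
    set w : Fin (m + m) → X := fun k => e - u (g k) with hw
    set b : Fin (m + m) → ℝ := fun k => a (g k) / (2 * c) with hb
    have hwmem : ∀ k, w k ∈ S \ {0, e} := by
      intro k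
      obtain ⟨huS, hune⟩ := hu (g k)
      simp only [mem_insert_iff, mem_singleton_iff, not_or] at hune
      refine ⟨h.compl_mem _ huS, ?_⟩
      simp only [mem_insert_iff, mem_singleton_iff, not_or, hw]
      constructor
      · intro h0
        exact hune.2 (by linear_combination (norm := module) -h0)
      · intro h0
        exact hune.1 (by linear_combination (norm := module) -h0)
    have hbpos : ∀ k, 0 < b k := by
      intro k
      have : 0 < a (g k) := by
        have := hgP k
        simp [hP] at this
        exact this
      positivity
    have hgsplit : ∀ (F : Fin n → X), ∑ k : Fin (m + m), F (g k)
        = ∑ i ∈ P, F i + ∑ i ∈ P, F i := by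
      intro F
      rw [Fin.sum_univ_add (f := fun k => F (g k))]
      have e1 : ∀ k : Fin m, g (Fin.castAdd m k) = f k := by
        intro k; simp [hg, Fin.castAdd, k.2]
      have e2 : ∀ k : Fin m, g (Fin.natAdd m k) = f k := by
        intro k
        have hnk : ¬ ((Fin.natAdd m k : ℕ) < m) := by simp [Fin.natAdd]
        simp only [hg, dif_neg hnk]
        congr 1
        ext
        simp [Fin.natAdd]
      rw [← hfsum F]
      congr 1
      · exact Finset.sum_congr rfl fun k _ => by rw [e1 k]
      · exact Finset.sum_congr rfl fun k _ => by rw [e2 k]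
    have hesum : e = ∑ k : Fin (m + m), b k • w k := by
      have := hgsplit (fun i => (a i / (2 * c)) • (e - u i))
      rw [show (∑ k : Fin (m + m), b k • w k)
          = ∑ k : Fin (m + m), (fun i => (a i / (2 * c)) • (e - u i)) (g k) from rfl, this]
      have hsmul : ∑ i ∈ P, (a i / (2 * c)) • (e - u i)
          = (2 * c)⁻¹ • ∑ i ∈ P, a i • (e - u i) := by
        rw [Finset.smul_sum]
        exact Finset.sum_congr rfl fun i _ => by
          rw [smul_smul]; ring_nf
      rw [hsmul, hid, smul_smul, ← add_smul]
      rw [show (2 * c)⁻¹ * c + (2 * c)⁻¹ * c = 1 by field_simp; ring]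
      rw [one_smul]
    -- apply head_sum
    have hm2 : 2 ≤ m + m := by omega
    have hhs := h.head_sum (m + m) hm2 w b hwmem hbpos hesum
    -- total sum of b
    have hbtotal : ∑ k : Fin (m + m), b k = A / c := by
      have hr : ∑ k : Fin (m + m), b k
          = ∑ i ∈ P, a i / (2 * c) + ∑ i ∈ P, a i / (2 * c) := by
        rw [Fin.sum_univ_add (f := b)]
        have e1 : ∀ k : Fin m, b (Fin.castAdd m k) = a (f k) / (2 * c) := by
          intro k; simp only [hb]; congr 1
          simp [hg, Fin.castAdd, k.2]
        have e2 : ∀ k : Fin m, b (Fin.natAdd m k) = a (f k) / (2 * c) := by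
          intro k
          have hnk : ¬ ((Fin.natAdd m k : ℕ) < m) := by simp [Fin.natAdd]
          simp only [hb, hg, dif_neg hnk]
          congr 2
          ext
          simp [Fin.natAdd]
        rw [← hfsum' (fun i => a i / (2 * c))]
        congr 1
        · exact Finset.sum_congr rfl fun k _ => e1 k
        · exact Finset.sum_congr rfl fun k _ => e2 k
      rw [hr]
      have hPA : ∑ i ∈ P, a i = A := by
        rw [hA]
        refine Finset.sum_subset (Finset.subset_univ _) ?_
        intro i _ hiP
        by_contra hne
        exact hiP (by simp [hP, lt_of_le_of_ne (ha i) (Ne.symm hne)])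
      rw [← Finset.sum_div, hPA]
      field_simp
      ring
    -- contradiction at j = 0
    have j0 : Fin (m + m) := ⟨0, by omega⟩
    have hj := hhs ⟨0, by omega⟩
    have herase : ∑ k ∈ Finset.univ.erase (⟨0, by omega⟩ : Fin (m + m)), b k
        = (∑ k : Fin (m + m), b k) - b ⟨0, by omega⟩ := by
      rw [Finset.sum_erase_eq_sub (Finset.mem_univ _)]
    rw [herase, hbtotal] at hj
    have hb0 : 0 < b ⟨0, by omega⟩ := hbpos _
    have : A / c ≤ 1 := by
      rw [div_le_one hcpos]; exact hAc
    linarith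
  have h0 : a0 • e = 0 := by
    have : ∑ i, a i • u i = 0 := by
      apply Finset.sum_eq_zero
      intro i _
      rw [key i, zero_smul]
    rw [this, add_zero] at hsum
    exact hsum
  rcases smul_eq_zero.mp h0 with h1 | h1
  · exact ⟨h1, key⟩
  · exact absurd h1 h.head_ne
end

section
/- Let S be a skeleton with head e and periphery S₀. For u ∈ S₀ let K(u) be the convex hull of {0, e, u}. If u, v ∈ S₀ with u ≠ v, then K(u) ∩ K(v) = [0,1]e, the segment from 0 to e. -/
open Set

lemma mem_hull_triple {X : Type*} [AddCommGroup X] [Module ℝ X] {e u x : X}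
    (hx : x ∈ convexHull ℝ ({0, e, u} : Set X)) :
    ∃ a b : ℝ, 0 ≤ a ∧ 0 ≤ b ∧ a + b ≤ 1 ∧ x = a • e + b • u := by
  rw [convexHull_insert (by simp : ({e, u} : Set X).Nonempty), convexHull_pair,
    mem_convexJoin] at hx
  obtain ⟨z, hz, y, hy, hxy⟩ := hx
  rw [mem_singleton_iff] at hz
  subst hz
  obtain ⟨t, t', ht, ht', htt', rfl⟩ := hy
  obtain ⟨p, p', hp, hp', hpp', rfl⟩ := hxy
  refine ⟨p' * t, p' * t', by positivity, by positivity, ?_, by module⟩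
  nlinarith

lemma skeleton_aux {X : Type*} [AddCommGroup X] [Module ℝ X] {S : Set X} {e : X}
    (h : IsSkeleton S e) {u v : X} (hu : u ∈ S \ {0, e}) (hv : v ∈ S \ {0, e})
    {β δ c : ℝ} (hβ : 0 < β) (hδ : 0 < δ) (hc : 0 ≤ c)
    (heq : β • u = c • e + δ • v) : c ≤ 0 ∧ c + δ ≤ β := by
  obtain ⟨hvS, hv0, hve⟩ : v ∈ S ∧ v ≠ 0 ∧ v ≠ e := by
    obtain ⟨h1, h2⟩ := hv; simp at h2; exact ⟨h1, h2⟩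
  have hev : e - v ∈ S \ {0, e} := by
    refine ⟨h.compl_mem v hvS, ?_⟩
    simp only [mem_insert_iff, mem_singleton_iff, not_or]
    constructor
    · intro hh; exact hve (sub_eq_zero.mp hh).symm
    · intro hh; exact hv0 (sub_eq_self.mp hh)
  set s : ℝ := c + δ with hsdef
  have hs : 0 < s := by positivity
  have h1 : s • e = β • u + δ • (e - v) := by rw [heq]; module
  have h2 : e = (β / s) • u + (δ / s) • (e - v) := by
    rw [div_eq_inv_mul, div_eq_inv_mul, mul_smul, mul_smul, ← smul_add, ← h1, smul_smul,
      inv_mul_cancel₀ hs.ne', one_smul]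
  have key := h.head_sum 2 le_rfl ![u, e - v] ![β / s, δ / s]
    (by intro i; fin_cases i
        · simpa using hu
        · simpa using hev)
    (by intro i; fin_cases i <;> simp <;> positivity)
    (by simp [Fin.sum_univ_two]; exact h2.trans (by module))
  have k0 := key 0
  have k1 := key 1
  rw [Finset.sum_erase_eq_sub (Finset.mem_univ _), Fin.sum_univ_two] at k0 k1
  simp only [Matrix.cons_val_zero, Matrix.cons_val_one, Matrix.head_cons] at k0 k1
  have e0 : δ / s ≥ 1 := by linarith
  have e1 : β / s ≥ 1 := by linarith
  rw [ge_iff_le, le_div_iff₀ hs] at e0 e1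
  constructor <;> linarith

theorem skeleton_K_inter
    {X : Type*} [AddCommGroup X] [Module ℝ X] {S : Set X} {e : X}
    (h : IsSkeleton S e) {u v : X} (hu : u ∈ S \ {0, e}) (hv : v ∈ S \ {0, e})
    (huv : u ≠ v) :
    convexHull ℝ {0, e, u} ∩ convexHull ℝ {0, e, v} = segment ℝ 0 e := by
  ext x
  constructor
  · rintro ⟨hxu, hxv⟩
    obtain ⟨a, b, ha, hb, hab, hx1⟩ := mem_hull_triple hxu
    obtain ⟨c, d, hc, hd, hcd, hx2⟩ := mem_hull_triple hxv
    rcases eq_or_lt_of_le hb with hb0 | hb0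
    · exact ⟨1 - a, a, by linarith, ha, by ring,
        by rw [smul_zero, zero_add, hx1, ← hb0, zero_smul, add_zero]⟩
    rcases eq_or_lt_of_le hd with hd0 | hd0
    · exact ⟨1 - c, c, by linarith, hc, by ring,
        by rw [smul_zero, zero_add, hx2, ← hd0, zero_smul, add_zero]⟩
    exfalso
    have he : a • e + b • u = c • e + d • v := hx1.symm.trans hx2
    rcases le_or_gt a c with hac | hac
    · have heq : b • u = (c - a) • e + d • v := by linear_combination (norm := module) he
      obtain ⟨e1, e2⟩ := skeleton_aux h hu hv hb0 hd0 (by linarith) heq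
      have hca : c - a = 0 := by linarith
      have heq' : b • u = d • v := by rw [heq, hca, zero_smul, zero_add]
      have heq2 : d • v = (0 : ℝ) • e + b • u := by rw [zero_smul, zero_add, heq']
      obtain ⟨_, e4⟩ := skeleton_aux h hv hu hd0 hb0 le_rfl heq2
      have hbd : b = d := by linarith
      apply huv
      exact smul_right_injective X hb0.ne' (heq'.trans (by rw [hbd]))
    · have heq : d • v = (a - c) • e + b • u := by
        have h' : d • v = (a • e + b • u) - c • e := by rw [he]; abel
        rw [h']; module
      obtain ⟨e1, _⟩ := skeleton_aux h hv hu hd0 hb0 (by linarith) heq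
      linarith
  · intro hx
    have h1 : segment ℝ (0 : X) e ⊆ convexHull ℝ {0, e, u} := by
      rw [← convexHull_pair]
      exact convexHull_mono (by intro y hy; simp at hy; rcases hy with h | h <;> simp [h])
    have h2 : segment ℝ (0 : X) e ⊆ convexHull ℝ {0, e, v} := by
      rw [← convexHull_pair]
      exact convexHull_mono (by intro y hy; simp at hy; rcases hy with h | h <;> simp [h])
    exact ⟨h1 hx, h2 hx⟩
end

section
/- Let S be a skeleton with head e in a nonzero real vector space X, let K = ⋃_{u∈S₀} conv{0,e,u}, and u ∈ S₀. Then for α, β ∈ ℝ, αe + βu ∈ K if and only if α ≥ 0, α + β ≥ 0, and max{α, α+β} ≤ 1. -/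
open Set

section Aux

variable {X : Type*} [AddCommGroup X] [Module ℝ X] {S : Set X} {e : X}

lemma skel_ne_of_mem {v : X} (hv : v ∈ S \ {0, e}) : v ≠ 0 ∧ v ≠ e := by
  have := hv.2
  simp only [mem_insert_iff, mem_singleton_iff, not_or] at this
  exact this

lemma skel_compl_mem (h : IsSkeleton S e) {v : X} (hv : v ∈ S \ {0, e}) :
    e - v ∈ S \ {0, e} := by
  obtain ⟨hv0, hve⟩ := skel_ne_of_mem hv
  refine ⟨h.compl_mem v hv.1, ?_⟩
  simp only [mem_insert_iff, mem_singleton_iff, not_or]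
  constructor
  · intro h'
    exact hve (by rw [sub_eq_zero] at h'; exact h'.symm)
  · intro h'
    exact hv0 (by have := sub_eq_self.mp h'; exact this)

lemma skel_A0 (h : IsSkeleton S e) {v : X} (hv : v ∈ S \ {0, e}) {c : ℝ}
    (hc : 0 < c) (he : e = c • v) : False := by
  set ε : ℝ := min c 1 / 2 with hεdef
  have hmin : 0 < min c 1 := lt_min hc one_pos
  have hε0 : 0 < ε := by positivity
  have hεc : ε < c := by
    have := min_le_left c 1; simp only [hεdef]; linarith
  have hε1 : ε < 1 := by
    have := min_le_right c 1; simp only [hεdef]; linarith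
  have key := h.head_sum 2 le_rfl ![v, v] ![c - ε, ε]
    (by intro i; fin_cases i <;> exact hv)
    (by intro i; fin_cases i <;> simp <;> linarith)
    (by rw [Fin.sum_univ_two]
        simp only [Matrix.cons_val_zero, Matrix.cons_val_one, Matrix.head_cons]
        rw [he]; module) 0
  rw [Finset.sum_erase_eq_sub (Finset.mem_univ _), Fin.sum_univ_two] at key
  simp only [Matrix.cons_val_zero, Matrix.cons_val_one, Matrix.head_cons] at key
  linarith

lemma skel_A (h : IsSkeleton S e) {v : X} (hv : v ∈ S \ {0, e}) {c : ℝ}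
    (he : e = c • v) : False := by
  rcases lt_trichotomy 0 c with hc | hc | hc
  · exact skel_A0 h hv hc he
  · exact h.head_ne (by rw [he, ← hc, zero_smul])
  · have hc' : c ≠ 0 := ne_of_lt hc
    have hvc : v = c⁻¹ • e := by
      rw [he, smul_smul, inv_mul_cancel₀ hc', one_smul]
    have hd : (1 : ℝ) < 1 - c⁻¹ := by
      have : c⁻¹ < 0 := inv_lt_zero.mpr hc
      linarith
    have hd0 : (1 - c⁻¹) ≠ 0 := by linarith
    have hev : e - v = (1 - c⁻¹) • e := by
      rw [hvc]; module
    have he2 : e = (1 - c⁻¹)⁻¹ • (e - v) := by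
      rw [hev, inv_smul_smul₀ hd0]
    exact skel_A0 h (skel_compl_mem h hv) (by positivity) he2

lemma skel_B (h : IsSkeleton S e) {u w : X} (hu : u ∈ S \ {0, e})
    (hw : w ∈ S \ {0, e}) {p q : ℝ} (hp : 0 < p) (hq : 0 < q)
    (he : e = p • u + q • w) : 1 ≤ p ∧ 1 ≤ q := by
  have key := h.head_sum 2 le_rfl ![u, w] ![p, q]
    (by intro i; fin_cases i <;> assumption)
    (by intro i; fin_cases i <;> simpa)
    (by rw [Fin.sum_univ_two]
        simp only [Matrix.cons_val_zero, Matrix.cons_val_one, Matrix.head_cons]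
        exact he)
  have k0 := key 0
  have k1 := key 1
  rw [Finset.sum_erase_eq_sub (Finset.mem_univ _), Fin.sum_univ_two] at k0 k1
  simp only [Matrix.cons_val_zero, Matrix.cons_val_one, Matrix.head_cons] at k0 k1
  constructor <;> linarith

lemma skel_B' (h : IsSkeleton S e) {u w : X} (hu : u ∈ S \ {0, e})
    (hw : w ∈ S \ {0, e}) {d p q : ℝ} (hd : 0 < d) (hp : 0 < p) (hq : 0 < q)
    (he : d • e = p • u + q • w) : d ≤ p ∧ d ≤ q := by
  have h2 : e = (d⁻¹ * p) • u + (d⁻¹ * q) • w := by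
    rw [← inv_smul_smul₀ hd.ne' e, he, smul_add, smul_smul, smul_smul]
  have hB := skel_B h hu hw (by positivity) (by positivity) h2
  have hcp : d * (d⁻¹ * p) = p := by field_simp
  have hcq : d * (d⁻¹ * q) = q := by field_simp
  constructor
  · nlinarith [mul_le_mul_of_nonneg_left hB.1 hd.le]
  · nlinarith [mul_le_mul_of_nonneg_left hB.2 hd.le]

lemma skel_L (h : IsSkeleton S e) {u w : X} (hu : u ∈ S \ {0, e})
    (hw : w ∈ S \ {0, e}) {p q : ℝ}
    (he : e = p • u + q • w) : 1 ≤ p ∧ 1 ≤ q := by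
  rcases lt_trichotomy 0 p with hp | hp | hp <;>
    rcases lt_trichotomy 0 q with hq | hq | hq
  · exact skel_B h hu hw hp hq he
  · exact absurd he (by intro he'; exact skel_A h hu (by rw [he', ← hq, zero_smul, add_zero]))
  · -- p > 0, q < 0
    have h2 : (1 - q) • e = p • u + (-q) • (e - w) := by
      linear_combination (norm := module) he
    have := skel_B' h hu (skel_compl_mem h hw) (by linarith) hp (by linarith) h2
    constructor <;> linarith [this.1, this.2]
  · exact absurd he (by intro he'; exact skel_A h hw (by rw [he', ← hp, zero_smul, zero_add]))
  · exact absurd he (by intro he'; exact skel_A h hw (by rw [he', ← hp, zero_smul, zero_add]))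
  · exact absurd he (by intro he'; exact skel_A h hw (by rw [he', ← hp, zero_smul, zero_add]))
  · -- p < 0, q > 0
    have h2 : (1 - p) • e = (-p) • (e - u) + q • w := by
      linear_combination (norm := module) he
    have := skel_B' h (skel_compl_mem h hu) hw (by linarith) (by linarith) hq h2
    constructor <;> linarith [this.1, this.2]
  · exact absurd he (by intro he'; exact skel_A h hu (by rw [he', ← hq, zero_smul, add_zero]))
  · -- p < 0, q < 0
    have h2 : (1 - p - q) • e = (-p) • (e - u) + (-q) • (e - w) := by
      linear_combination (norm := module) he
    have := skel_B' h (skel_compl_mem h hu) (skel_compl_mem h hw)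
      (by linarith) (by linarith) (by linarith) h2
    constructor <;> linarith [this.1, this.2]

lemma skel_L' (h : IsSkeleton S e) {u w : X} (hu : u ∈ S \ {0, e})
    (hw : w ∈ S \ {0, e}) {d p q : ℝ} (hd : 0 < d)
    (he : d • e = p • u + q • w) : d ≤ p ∧ d ≤ q := by
  have h2 : e = (d⁻¹ * p) • u + (d⁻¹ * q) • w := by
    rw [← inv_smul_smul₀ hd.ne' e, he, smul_add, smul_smul, smul_smul]
  have hB := skel_L h hu hw h2
  have hcp : d * (d⁻¹ * p) = p := by field_simp
  have hcq : d * (d⁻¹ * q) = q := by field_simp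
  constructor
  · nlinarith [mul_le_mul_of_nonneg_left hB.1 hd.le]
  · nlinarith [mul_le_mul_of_nonneg_left hB.2 hd.le]

lemma skel_claim (h : IsSkeleton S e) {u w : X} (hu : u ∈ S \ {0, e})
    (hw : w ∈ S \ {0, e}) {a b p q : ℝ}
    (heq : a • e + b • u = p • e + q • w)
    (hp : 0 ≤ p) (hq : 0 ≤ q) (hpq : p + q ≤ 1) : 0 ≤ a ∧ a ≤ 1 := by
  rcases lt_trichotomy a p with hap | hap | hap
  · exfalso
    have h2 : (p - a) • e = b • u + (-q) • w := by
      linear_combination (norm := module) -heq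
    have := skel_L' h hu hw (by linarith) h2
    linarith [this.2]
  · constructor <;> linarith
  · have h2 : (a - p) • e = (-b) • u + q • w := by
      linear_combination (norm := module) heq
    have := skel_L' h hu hw (by linarith) h2
    constructor <;> linarith [this.1, this.2]

lemma skel_hullmem (x y : X) {p q : ℝ} (hp : 0 ≤ p) (hq : 0 ≤ q)
    (hpq : p + q ≤ 1) : p • x + q • y ∈ convexHull ℝ ({0, x, y} : Set X) := by
  have h0 : (0 : X) ∈ convexHull ℝ ({0, x, y} : Set X) :=
    subset_convexHull ℝ _ (by simp)
  have hx : x ∈ convexHull ℝ ({0, x, y} : Set X) :=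
    subset_convexHull ℝ _ (by simp)
  have hy : y ∈ convexHull ℝ ({0, x, y} : Set X) :=
    subset_convexHull ℝ _ (by simp)
  have hconv := convex_convexHull ℝ ({0, x, y} : Set X)
  by_cases hp1 : p = 1
  · have hq0 : q = 0 := by linarith
    simpa [hp1, hq0] using hx
  · have hplt : p < 1 := lt_of_le_of_ne (by linarith) hp1
    have hp1' : (1 : ℝ) - p ≠ 0 := by intro h'; apply hp1; linarith
    set t : ℝ := q / (1 - p) with htdef
    have ht0 : 0 ≤ t := div_nonneg hq (by linarith)
    have ht1 : t ≤ 1 := by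
      rw [htdef, div_le_one (by linarith)]; linarith
    have hz : (1 - t) • (0 : X) + t • y ∈ convexHull ℝ ({0, x, y} : Set X) :=
      hconv h0 hy (by linarith) ht0 (by ring)
    have hmem := hconv hx hz hp (by linarith : (0:ℝ) ≤ 1 - p) (by ring)
    have hcoef : (1 - p) * t = q := by
      rw [htdef]; field_simp
    have : p • x + (1 - p) • ((1 - t) • (0 : X) + t • y) = p • x + q • y := by
      rw [smul_zero, zero_add, smul_smul, hcoef]
    rwa [this] at hmem

lemma skel_hull_triple {x y z : X} (hx : x ≠ 0)
    (hmem : z ∈ convexHull ℝ ({0, x, y} : Set X)) :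
    ∃ p q : ℝ, 0 ≤ p ∧ 0 ≤ q ∧ p + q ≤ 1 ∧ z = p • x + q • y := by
  rw [show ({0, x, y} : Set X) = insert 0 {x, y} from rfl,
    convexHull_insert ⟨x, by simp⟩, convexHull_pair] at hmem
  rw [mem_convexJoin] at hmem
  obtain ⟨o, ho, m, hm, hz⟩ := hmem
  rw [mem_singleton_iff] at ho
  subst ho
  obtain ⟨c1, c2, hc1, hc2, hc, rfl⟩ := hm
  obtain ⟨s1, s2, hs1, hs2, hs, hz'⟩ := hz
  refine ⟨s2 * c1, s2 * c2, by positivity, by positivity, by nlinarith, ?_⟩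
  rw [← hz']; module

end Aux

theorem skeleton_mem_K_iff
    {X : Type*} [AddCommGroup X] [Module ℝ X] {S : Set X} {e : X}
    (h : IsSkeleton S e) {u : X} (hu : u ∈ S \ {0, e}) (a b : ℝ) :
    a • e + b • u ∈ (⋃ w ∈ S \ {0, e}, convexHull ℝ {0, e, w}) ↔
      0 ≤ a ∧ 0 ≤ a + b ∧ max a (a + b) ≤ 1 := by
  constructor
  · intro hmem
    simp only [mem_iUnion, exists_prop] at hmem
    obtain ⟨w, hw, hzw⟩ := hmem
    obtain ⟨p, q, hp, hq, hpq, heq⟩ := skel_hull_triple h.head_ne hzw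
    have H1 := skel_claim h hu hw heq hp hq hpq
    have heq2 : (a + b) • e + (-b) • (e - u) = p • e + q • w := by
      linear_combination (norm := module) heq
    have H2 := skel_claim h (skel_compl_mem h hu) hw heq2 hp hq hpq
    exact ⟨H1.1, H2.1, max_le H1.2 H2.2⟩
  · rintro ⟨ha, hab, hmax⟩
    have ha1 : a ≤ 1 := le_trans (le_max_left _ _) hmax
    have hab1 : a + b ≤ 1 := le_trans (le_max_right _ _) hmax
    simp only [mem_iUnion, exists_prop]
    rcases le_or_gt 0 b with hb | hb
    · exact ⟨u, hu, skel_hullmem e u ha hb hab1⟩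
    · refine ⟨e - u, skel_compl_mem h hu, ?_⟩
      have hrw : a • e + b • u = (a + b) • e + (-b) • (e - u) := by module
      rw [hrw]
      exact skel_hullmem e (e - u) hab (by linarith) (by linarith)
end

section
/- Let X be a nonzero real vector space and S a skeleton in X with head e. Let V be the linear span of S and V⁺ the cone generated by S (nonnegative combinations of elements of S). Then (V, V⁺, e) is an order unit space (V⁺ is a proper, Archimedean, generating cone with order unit e), and S \ {0, e} = {v ∈ V⁺ : ‖v‖ = ‖e − v‖ = 1}, where ‖·‖ is the order unit norm. -/
open Set

/-- `C` is the positive cone of an order unit space structure on `V` with order unit `e`: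
a proper, Archimedean cone for which `e` is an order unit. -/
structure IsOrderUnitSpace {V : Type*} [AddCommGroup V] [Module ℝ V]
    (C : Set V) (e : V) : Prop where
  zero_mem : (0 : V) ∈ C
  add_mem : ∀ u ∈ C, ∀ v ∈ C, u + v ∈ C
  smul_mem : ∀ r : ℝ, 0 ≤ r → ∀ v ∈ C, r • v ∈ C
  proper : ∀ v ∈ C, -v ∈ C → v = 0
  arch : ∀ v : V, (∀ ε : ℝ, 0 < ε → ε • e + v ∈ C) → v ∈ C
  unit : ∀ v : V, ∃ a : ℝ, 0 < a ∧ a • e - v ∈ C ∧ a • e + v ∈ C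

/-- The order unit norm `‖v‖ = inf {a > 0 : a • e ± v ∈ C}`. -/
noncomputable def ouNorm {V : Type*} [AddCommGroup V] [Module ℝ V]
    (C : Set V) (e : V) (v : V) : ℝ :=
  sInf {a : ℝ | 0 < a ∧ a • e - v ∈ C ∧ a • e + v ∈ C}

/-- A state: a positive linear functional sending `e` to `1`. -/
def IsState {V : Type*} [AddCommGroup V] [Module ℝ V]
    (C : Set V) (e : V) (f : V →ₗ[ℝ] ℝ) : Prop :=
  (∀ v ∈ C, 0 ≤ f v) ∧ f e = 1

/-- `∞`-orthogonality with respect to the order unit norm. -/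
def PerpInf {V : Type*} [AddCommGroup V] [Module ℝ V]
    (C : Set V) (e : V) (x y : V) : Prop :=
  ∀ k : ℝ, ouNorm C e (x + k • y) = max (ouNorm C e x) (ouNorm C e (k • y))

/-- A peripheral element of an order unit space. -/
def Peripheral {V : Type*} [AddCommGroup V] [Module ℝ V]
    (C : Set V) (e : V) (u : V) : Prop :=
  u ∈ C ∧ e - u ∈ C ∧ ouNorm C e u = 1 ∧ ouNorm C e (e - u) = 1


/-- The cone of all nonnegative combinations of elements of . -/
def coneOf {X : Type*} [AddCommGroup X] [Module ℝ X] (S : Set X) : Set X :=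
  {v | ∃ (n : ℕ) (u : Fin n → X) (a : Fin n → ℝ),
    (∀ i, u i ∈ S) ∧ (∀ i, 0 ≤ a i) ∧ v = ∑ i, a i • u i}


/-!
Write `S₀ = S \ {0, e}`. Combining axiom (2) with induction on the number of summands, every
element of the cone is `a • e + b • w` with `a, b ≥ 0` and `w ∈ S₀`. Axiom (3) for two summands
says that `m • e = p • u + q • v` with `u, v ∈ S₀` forces `m ≤ p` and `m ≤ q`; applied to the
complements `e - w ∈ S₀`, this shows that the order unit norm of `a • e + b • w` is exactly `a + b`.
Properness, the Archimedean property and the description of `S₀` as the elements `v` of the cone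
with `‖v‖ = ‖e - v‖ = 1` all follow by comparing coefficients of such two-term representations.
-/

section coneOf

variable {X : Type*} [AddCommGroup X] [Module ℝ X] {S : Set X}

lemma zero_mem_coneOf : (0 : X) ∈ coneOf S :=
  ⟨0, Fin.elim0, Fin.elim0, (·.elim0), (·.elim0), by simp⟩

lemma mem_coneOf_of_mem {x : X} (hx : x ∈ S) : x ∈ coneOf S :=
  ⟨1, fun _ => x, fun _ => 1, fun _ => hx, fun _ => zero_le_one, by simp⟩

lemma add_mem_coneOf {x y : X} (hx : x ∈ coneOf S) (hy : y ∈ coneOf S) : x + y ∈ coneOf S := by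
  obtain ⟨n, u, a, hu, ha, rfl⟩ := hx
  obtain ⟨m, v, b, hv, hb, rfl⟩ := hy
  refine ⟨n + m, Fin.addCases u v, Fin.addCases a b, Fin.addCases ?_ ?_, Fin.addCases ?_ ?_, ?_⟩
  all_goals simp [Fin.sum_univ_add, hu, hv, ha, hb]

lemma smul_mem_coneOf {r : ℝ} (hr : 0 ≤ r) {x : X} (hx : x ∈ coneOf S) : r • x ∈ coneOf S := by
  obtain ⟨n, u, a, hu, ha, rfl⟩ := hx
  refine ⟨n, u, fun i => r * a i, hu, fun i => mul_nonneg hr (ha i), ?_⟩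
  simp [Finset.smul_sum, smul_smul]

lemma smul_add_smul_mem_coneOf {x y : X} (hx : x ∈ S) (hy : y ∈ S) {a b : ℝ}
    (ha : 0 ≤ a) (hb : 0 ≤ b) : a • x + b • y ∈ coneOf S :=
  add_mem_coneOf (smul_mem_coneOf ha (mem_coneOf_of_mem hx))
    (smul_mem_coneOf hb (mem_coneOf_of_mem hy))

end coneOf

lemma ouNorm_subtype {X : Type*} [AddCommGroup X] [Module ℝ X] (V : Submodule ℝ X) (C : Set X)
    {e : X} (he : e ∈ V) (v : V) :
    ouNorm {w : V | (w : X) ∈ C} ⟨e, he⟩ v = ouNorm C e v :=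
  rfl

namespace IsSkeleton

variable {X : Type*} [AddCommGroup X] [Module ℝ X] {S : Set X} {e : X}

lemma sub_mem_sdiff (h : IsSkeleton S e) {w : X} (hw : w ∈ S \ {0, e}) :
    e - w ∈ S \ {0, e} := by
  refine ⟨h.compl_mem w hw.1, ?_⟩
  rintro (hw0 | hwe)
  · exact hw.2 (by simp [(sub_eq_zero.mp hw0).symm])
  · exact hw.2 (by simp [sub_eq_self.mp hwe])

lemma sdiff_nonempty (h : IsSkeleton S e) : (S \ {0, e}).Nonempty := by
  obtain ⟨w, hw, -⟩ := h.comb 0 h.zero_mem 0 h.zero_mem 0 le_rfl zero_le_one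
  exact ⟨w, hw⟩

lemma le_of_smul_eq_of_pos (h : IsSkeleton S e) {u v : X} (hu : u ∈ S \ {0, e})
    (hv : v ∈ S \ {0, e}) {m p q : ℝ} (hm : 0 < m) (hp : 0 < p) (hq : 0 < q)
    (heq : m • e = p • u + q • v) : m ≤ p ∧ m ≤ q := by
  have heq' : e = (p / m) • u + (q / m) • v := by
    rw [← inv_smul_smul₀ hm.ne' e, heq]
    simp [smul_add, smul_smul, div_eq_inv_mul]
  have key := h.head_sum 2 le_rfl ![u, v] ![p / m, q / m]
    (fun i => by fin_cases i <;> assumption) (fun i => by fin_cases i <;> simp [hp, hq, hm])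
    (by simpa [Fin.sum_univ_two] using heq')
  have hpm : 1 ≤ p / m := by simpa [Finset.sum_erase_eq_sub, Fin.sum_univ_two] using key 1
  have hqm : 1 ≤ q / m := by simpa [Finset.sum_erase_eq_sub, Fin.sum_univ_two] using key 0
  exact ⟨(one_le_div hm).mp hpm, (one_le_div hm).mp hqm⟩

lemma smul_head_ne_smul (h : IsSkeleton S e) {w : X} (hw : w ∈ S \ {0, e}) {m c : ℝ}
    (hm : 0 < m) (hc : 0 ≤ c) : m • e ≠ c • w := by
  intro heq
  rcases hc.eq_or_lt with rfl | hc
  · exact h.head_ne ((smul_eq_zero.mp (heq.trans (zero_smul ℝ w))).resolve_left hm.ne')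
  -- writing `c • w = (c - ε) • w + ε • w` with `ε < m` contradicts the two-term bound
  set ε := min c m / 2
  have hε : 0 < ε := by positivity
  have hεm : ε < m := (half_lt_self (lt_min hc hm)).trans_le (min_le_right c m)
  have hεc : ε < c := (half_lt_self (lt_min hc hm)).trans_le (min_le_left c m)
  have heq' : m • e = (c - ε) • w + ε • w := by rw [← add_smul, sub_add_cancel, heq]
  exact hεm.not_ge (h.le_of_smul_eq_of_pos hw hw hm (by linarith) hε heq').2

lemma le_of_smul_eq (h : IsSkeleton S e) {u v : X} (hu : u ∈ S \ {0, e}) (hv : v ∈ S \ {0, e})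
    {m p q : ℝ} (hm : 0 < m) (hp : 0 ≤ p) (hq : 0 ≤ q) (heq : m • e = p • u + q • v) :
    m ≤ p ∧ m ≤ q := by
  rcases hp.eq_or_lt with rfl | hp
  · exact absurd (by simpa using heq) (h.smul_head_ne_smul hv hm hq)
  rcases hq.eq_or_lt with rfl | hq
  · exact absurd (by simpa using heq) (h.smul_head_ne_smul hu hm hp.le)
  exact h.le_of_smul_eq_of_pos hu hv hm hp hq heq

lemma exists_smul_add_smul_eq (h : IsSkeleton S e) {u v : X} (hu : u ∈ S) (hv : v ∈ S)
    {c d : ℝ} (hc : 0 ≤ c) (hd : 0 ≤ d) :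
    ∃ w ∈ S \ {0, e}, ∃ a b : ℝ, 0 ≤ a ∧ 0 ≤ b ∧ c • u + d • v = a • e + b • w := by
  rcases (add_nonneg hc hd).eq_or_lt with hs | hs
  · obtain ⟨w, hw⟩ := h.sdiff_nonempty
    obtain ⟨rfl, rfl⟩ : c = 0 ∧ d = 0 := ⟨by linarith, by linarith⟩
    exact ⟨w, hw, 0, 0, le_rfl, le_rfl, by simp⟩
  obtain ⟨w, hw, a, b, ha, hb, hcomb⟩ := h.comb u hu v hv (c / (c + d)) (by positivity)
    (div_le_one_of_le₀ (by linarith) hs.le)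
  refine ⟨w, hw, (c + d) * a, (c + d) * b, by positivity, by positivity, ?_⟩
  have hd' : d = (c + d) * (1 - c / (c + d)) := by field_simp; ring
  rw [mul_smul, mul_smul, ← smul_add, ← hcomb, smul_add, smul_smul, smul_smul,
    mul_div_cancel₀ _ hs.ne', ← hd']

lemma exists_eq_smul_head_add_smul (h : IsSkeleton S e) {x : X} (hx : x ∈ coneOf S) :
    ∃ w ∈ S \ {0, e}, ∃ a b : ℝ, 0 ≤ a ∧ 0 ≤ b ∧ x = a • e + b • w := by
  obtain ⟨n, u, c, hu, hc, rfl⟩ := hx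
  induction n with
  | zero =>
    obtain ⟨w, hw⟩ := h.sdiff_nonempty
    exact ⟨w, hw, 0, 0, le_rfl, le_rfl, by simp⟩
  | succ n ih =>
    obtain ⟨w, hw, a, b, ha, hb, hsum⟩ :=
      ih (fun i => u i.castSucc) (fun i => c i.castSucc) (fun i => hu _) (fun i => hc _)
    obtain ⟨w', hw', a', b', ha', hb', hcomb⟩ :=
      h.exists_smul_add_smul_eq hw.1 (hu (Fin.last n)) hb (hc (Fin.last n))
    refine ⟨w', hw', a + a', b', by positivity, hb', ?_⟩
    rw [Fin.sum_univ_castSucc, hsum, add_assoc, hcomb, ← add_assoc, ← add_smul]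

lemma eq_zero_of_smul_head_add_smul_add_smul_eq_zero (h : IsSkeleton S e) {w w' : X}
    (hw : w ∈ S \ {0, e}) (hw' : w' ∈ S \ {0, e}) {s b d : ℝ} (hs : 0 ≤ s) (hb : 0 ≤ b)
    (hd : 0 ≤ d) (hsum : s • e + b • w + d • w' = 0) : s = 0 ∧ b = 0 ∧ d = 0 := by
  rcases (by positivity : 0 ≤ s + b + d).eq_or_lt with h0 | hpos
  · exact ⟨by linarith, by linarith, by linarith⟩
  have key : (s + b + d) • e = b • (e - w) + d • (e - w') := by
    linear_combination (norm := module) hsum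
  have := h.le_of_smul_eq (h.sub_mem_sdiff hw) (h.sub_mem_sdiff hw') hpos hb hd key
  exact ⟨by linarith, by linarith, by linarith⟩

lemma smul_add_smul_head_ne_smul (h : IsSkeleton S e) {w₁ w₂ : X} (hw₁ : w₁ ∈ S \ {0, e})
    (hw₂ : w₂ ∈ S \ {0, e}) {t b₁ b₂ : ℝ} (ht : 0 < t) (hb₁ : 0 ≤ b₁) (hb₂ : 0 ≤ b₂) :
    b₂ • w₂ + t • e ≠ b₁ • w₁ := by
  intro heq
  have key : (b₂ + t) • e = b₂ • (e - w₂) + b₁ • w₁ := by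
    linear_combination (norm := module) heq
  have := h.le_of_smul_eq (h.sub_mem_sdiff hw₂) hw₁ (by linarith) hb₂ hb₁ key
  linarith

lemma add_le_of_smul_head_sub_mem_coneOf (h : IsSkeleton S e) {w : X} (hw : w ∈ S \ {0, e})
    {a b r : ℝ} (hb : 0 ≤ b) (hr : r • e - (a • e + b • w) ∈ coneOf S) : a + b ≤ r := by
  obtain ⟨w', hw', c, d, hc, hd, hrep⟩ := h.exists_eq_smul_head_add_smul hr
  rcases le_or_gt (b + d - (r - a - c)) 0 with hle | hpos
  · linarith
  have key : (b + d - (r - a - c)) • e = b • (e - w) + d • (e - w') := by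
    linear_combination (norm := module) -hrep
  have := h.le_of_smul_eq (h.sub_mem_sdiff hw) (h.sub_mem_sdiff hw') hpos hb hd key
  linarith

lemma ouNorm_smul_head_add_smul (h : IsSkeleton S e) {w : X} (hw : w ∈ S \ {0, e}) {a b : ℝ}
    (ha : 0 ≤ a) (hb : 0 ≤ b) : ouNorm (coneOf S) e (a • e + b • w) = a + b := by
  have mem_of_lt : ∀ r, a + b < r →
      r ∈ {r : ℝ | 0 < r ∧ r • e - (a • e + b • w) ∈ coneOf S ∧
        r • e + (a • e + b • w) ∈ coneOf S} := by
    intro r hr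
    refine ⟨by linarith, ?_, ?_⟩
    · rw [show r • e - (a • e + b • w) = (r - a - b) • e + b • (e - w) by module]
      exact smul_add_smul_mem_coneOf h.head_mem (h.compl_mem w hw.1) (by linarith) hb
    · rw [show r • e + (a • e + b • w) = (r + a) • e + b • w by module]
      exact smul_add_smul_mem_coneOf h.head_mem hw.1 (by linarith) hb
  refine csInf_eq_of_forall_ge_of_forall_gt_exists_lt ⟨_, mem_of_lt (a + b + 1) (by linarith)⟩
    (fun r hr => h.add_le_of_smul_head_sub_mem_coneOf hw hb hr.2.1) fun r hr => ?_
  exact ⟨(a + b + r) / 2, mem_of_lt _ (by linarith), by linarith⟩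

lemma mem_coneOf_or_exists_add_smul_head_eq (h : IsSkeleton S e) {x : X} {ε : ℝ}
    (hx : ε • e + x ∈ coneOf S) :
    x ∈ coneOf S ∨ ∃ δ, 0 < δ ∧ δ ≤ ε ∧ ∃ w ∈ S \ {0, e}, ∃ b : ℝ, 0 ≤ b ∧ x + δ • e = b • w := by
  obtain ⟨w, hw, a, b, ha, hb, hrep⟩ := h.exists_eq_smul_head_add_smul hx
  rcases le_or_gt ε a with hle | hlt
  · left
    rw [show x = (a - ε) • e + b • w by linear_combination (norm := module) hrep]
    exact smul_add_smul_mem_coneOf h.head_mem hw.1 (by linarith) hb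
  · exact .inr ⟨ε - a, by linarith, by linarith, w, hw, b, hb,
      by linear_combination (norm := module) hrep⟩

lemma mem_coneOf_of_forall_pos (h : IsSkeleton S e) {x : X}
    (hx : ∀ ε : ℝ, 0 < ε → ε • e + x ∈ coneOf S) : x ∈ coneOf S := by
  obtain hmem | ⟨δ₁, hδ₁, -, w₁, hw₁, b₁, hb₁, h₁⟩ :=
    h.mem_coneOf_or_exists_add_smul_head_eq (hx 1 one_pos)
  · exact hmem
  obtain hmem | ⟨δ₂, hδ₂, hδ₂le, w₂, hw₂, b₂, hb₂, h₂⟩ :=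
    h.mem_coneOf_or_exists_add_smul_head_eq (hx (δ₁ / 2) (by positivity))
  · exact hmem
  have hrel : b₂ • w₂ + (δ₁ - δ₂) • e = b₁ • w₁ := by
    linear_combination (norm := module) h₁ - h₂
  exact absurd hrel <| h.smul_add_smul_head_ne_smul hw₁ hw₂ (sub_pos.mpr (by linarith)) hb₁ hb₂

lemma eq_zero_of_mem_coneOf_of_neg_mem (h : IsSkeleton S e) {x : X} (hx : x ∈ coneOf S)
    (hx' : -x ∈ coneOf S) : x = 0 := by
  obtain ⟨w, hw, a, b, ha, hb, h₁⟩ := h.exists_eq_smul_head_add_smul hx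
  obtain ⟨w', hw', c, d, hc, hd, h₂⟩ := h.exists_eq_smul_head_add_smul hx'
  obtain ⟨hac, rfl, -⟩ := h.eq_zero_of_smul_head_add_smul_add_smul_eq_zero hw hw'
    (s := a + c) (by positivity) hb hd (by linear_combination (norm := module) -h₁ - h₂)
  rw [h₁, show a = 0 by linarith]
  simp

lemma exists_smul_head_sub_add_mem_coneOf (h : IsSkeleton S e) {x : X}
    (hx : x ∈ Submodule.span ℝ S) :
    ∃ a : ℝ, 0 < a ∧ a • e - x ∈ coneOf S ∧ a • e + x ∈ coneOf S := by
  have he : e ∈ coneOf S := mem_coneOf_of_mem h.head_mem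
  suffices ∃ a : ℝ, 0 ≤ a ∧ a • e - x ∈ coneOf S ∧ a • e + x ∈ coneOf S by
    obtain ⟨a, ha, h₁, h₂⟩ := this
    refine ⟨a + 1, by linarith, ?_, ?_⟩
    · simpa [add_smul, add_sub_right_comm] using add_mem_coneOf h₁ he
    · simpa [add_smul, add_right_comm] using add_mem_coneOf h₂ he
  induction hx using Submodule.span_induction with
  | mem x hx =>
    exact ⟨1, zero_le_one, by simpa using mem_coneOf_of_mem (h.compl_mem x hx),
      by simpa using smul_add_smul_mem_coneOf h.head_mem hx zero_le_one zero_le_one⟩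
  | zero => exact ⟨0, le_rfl, by simpa using zero_mem_coneOf, by simpa using zero_mem_coneOf⟩
  | add x y _ _ ihx ihy =>
    obtain ⟨a, ha, ha₁, ha₂⟩ := ihx
    obtain ⟨c, hc, hc₁, hc₂⟩ := ihy
    refine ⟨a + c, by linarith, ?_, ?_⟩
    · rw [show (a + c) • e - (x + y) = (a • e - x) + (c • e - y) by module]
      exact add_mem_coneOf ha₁ hc₁
    · rw [show (a + c) • e + (x + y) = (a • e + x) + (c • e + y) by module]
      exact add_mem_coneOf ha₂ hc₂
  | smul r x _ ih =>
    obtain ⟨a, ha, ha₁, ha₂⟩ := ih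
    rcases le_or_gt 0 r with hr | hr
    · refine ⟨r * a, by positivity, ?_, ?_⟩
      · simpa [mul_smul, smul_sub] using smul_mem_coneOf hr ha₁
      · simpa [mul_smul, smul_add] using smul_mem_coneOf hr ha₂
    · refine ⟨-r * a, mul_nonneg (by linarith) ha, ?_, ?_⟩
      · rw [show (-r * a) • e - r • x = (-r) • (a • e + x) by module]
        exact smul_mem_coneOf (by linarith) ha₂
      · rw [show (-r * a) • e + r • x = (-r) • (a • e - x) by module]
        exact smul_mem_coneOf (by linarith) ha₁

lemma isOrderUnitSpace (h : IsSkeleton S e) (he : e ∈ Submodule.span ℝ S) :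
    IsOrderUnitSpace {v : Submodule.span ℝ S | (v : X) ∈ coneOf S} ⟨e, he⟩ where
  zero_mem := zero_mem_coneOf
  add_mem _ hu _ hv := add_mem_coneOf hu hv
  smul_mem _ hr _ hv := smul_mem_coneOf hr hv
  proper _ hv hv' := Subtype.ext (h.eq_zero_of_mem_coneOf_of_neg_mem hv hv')
  arch _ hv := h.mem_coneOf_of_forall_pos hv
  unit v := h.exists_smul_head_sub_add_mem_coneOf v.2

lemma mem_sdiff_iff (h : IsSkeleton S e) {x : X} :
    x ∈ S \ {0, e} ↔
      x ∈ coneOf S ∧ ouNorm (coneOf S) e x = 1 ∧ ouNorm (coneOf S) e (e - x) = 1 := by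
  constructor
  · intro hx
    refine ⟨mem_coneOf_of_mem hx.1, ?_, ?_⟩
    · simpa using h.ouNorm_smul_head_add_smul hx le_rfl zero_le_one
    · simpa using h.ouNorm_smul_head_add_smul (h.sub_mem_sdiff hx) le_rfl zero_le_one
  · rintro ⟨hx, hx₁, hx₂⟩
    obtain ⟨w, hw, a, b, ha, hb, rfl⟩ := h.exists_eq_smul_head_add_smul hx
    rw [h.ouNorm_smul_head_add_smul hw ha hb] at hx₁
    rw [show e - (a • e + b • w) = (1 - a - b) • e + b • (e - w) by module,
      h.ouNorm_smul_head_add_smul (h.sub_mem_sdiff hw) (by linarith) hb] at hx₂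
    obtain ⟨rfl, rfl⟩ : a = 0 ∧ b = 1 := ⟨by linarith, by linarith⟩
    simpa using hw

end IsSkeleton

theorem skeleton_gives_order_unit_space
    {X : Type*} [AddCommGroup X] [Module ℝ X] {S : Set X} {e : X}
    (h : IsSkeleton S e) (he : e ∈ Submodule.span ℝ S) :
    IsOrderUnitSpace {v : Submodule.span ℝ S | (v : X) ∈ coneOf S} ⟨e, he⟩ ∧
    S \ {0, e} = (fun v : Submodule.span ℝ S => (v : X)) ''
      {v : Submodule.span ℝ S | (v : X) ∈ coneOf S ∧
        ouNorm {w : Submodule.span ℝ S | (w : X) ∈ coneOf S} ⟨e, he⟩ v = 1 ∧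
        ouNorm {w : Submodule.span ℝ S | (w : X) ∈ coneOf S} ⟨e, he⟩ (⟨e, he⟩ - v) = 1} := by
  refine ⟨h.isOrderUnitSpace he, Set.ext fun x => ?_⟩
  simp only [ouNorm_subtype, Submodule.coe_sub, Set.mem_image, Set.mem_ofPred_eq]
  constructor
  · exact fun hx => ⟨⟨x, Submodule.subset_span hx.1⟩, h.mem_sdiff_iff.mp hx, rfl⟩
  · rintro ⟨v, hv, rfl⟩
    exact h.mem_sdiff_iff.mpr hv
end

section
/- Let (V, e) be an order unit space of dimension at least 2, and let u ∈ V⁺ with ‖u‖ = 1 and u ≠ e. For λ ∈ ℝ set u_λ = e − λ(e − u). Then ‖u_λ‖ = max{1, |λ‖e−u‖ − 1|} for every λ ∈ ℝ. -/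
open Set

section Aux
variable {V : Type*} [AddCommGroup V] [Module ℝ V] {C : Set V} {e : V}
  (h : IsOrderUnitSpace C e)

include h

lemma OUS.smul_mem_iff {c : ℝ} (hc : 0 < c) {x : V} : c • x ∈ C ↔ x ∈ C := by
  constructor
  · intro hx
    have hx2 := h.smul_mem c⁻¹ (by positivity) _ hx
    rwa [smul_smul, inv_mul_cancel₀ hc.ne', one_smul] at hx2
  · exact fun hx => h.smul_mem c hc.le _ hx

lemma OUS.e_mem : e ∈ C := by
  obtain ⟨a, ha, _, h2⟩ := h.unit e
  have h3 : (a + 1) • e ∈ C := by rwa [add_smul, one_smul]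
  exact (OUS.smul_mem_iff h (by linarith)).mp h3

lemma OUS.e_ne_zero (hdim : 2 ≤ Module.rank ℝ V) : e ≠ 0 := by
  intro he
  have hall : ∀ v : V, v = 0 := by
    intro v
    obtain ⟨a, _, h1, h2⟩ := h.unit v
    rw [he, smul_zero, zero_sub] at h1
    rw [he, smul_zero, zero_add] at h2
    exact h.proper v h2 h1
  have h0 : Module.rank ℝ V = 0 := by
    rw [rank_eq_zero_iff]
    exact fun x => ⟨1, one_ne_zero, by rw [hall x, smul_zero]⟩
  rw [h0] at hdim
  exact absurd hdim (by norm_num)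

lemma OUS.te_mem_iff (he0 : e ≠ 0) {t : ℝ} : t • e ∈ C ↔ 0 ≤ t := by
  constructor
  · intro ht
    by_contra hlt
    push_neg at hlt
    have h2 : (-t) • e ∈ C := h.smul_mem _ (by linarith) _ (OUS.e_mem h)
    have h3 : t • e = 0 := h.proper _ ht (by rwa [neg_smul] at h2)
    rcases smul_eq_zero.mp h3 with h4 | h4
    · linarith
    · exact he0 h4
  · exact fun ht => h.smul_mem t ht _ (OUS.e_mem h)

lemma OUS.norm_spec (he0 : e ≠ 0) {v : V} (hv : v ∈ C) (hv0 : v ≠ 0) :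
    0 < ouNorm C e v ∧ ∀ a : ℝ, (a • e - v ∈ C ↔ ouNorm C e v ≤ a) := by
  set T : Set ℝ := {a : ℝ | 0 < a ∧ a • e - v ∈ C ∧ a • e + v ∈ C} with hT
  have hTiff : ∀ a : ℝ, a ∈ T ↔ 0 < a ∧ a • e - v ∈ C := by
    intro a
    constructor
    · exact fun ha => ⟨ha.1, ha.2.1⟩
    · rintro ⟨ha, ha2⟩
      exact ⟨ha, ha2, h.add_mem _ (h.smul_mem a ha.le _ (OUS.e_mem h)) _ hv⟩
  have hup : ∀ a ∈ T, ∀ b : ℝ, a ≤ b → b ∈ T := by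
    intro a ha b hab
    rw [hTiff] at ha ⊢
    refine ⟨lt_of_lt_of_le ha.1 hab, ?_⟩
    have heq : b • e - v = (b - a) • e + (a • e - v) := by module
    rw [heq]
    exact h.add_mem _ (h.smul_mem _ (by linarith) _ (OUS.e_mem h)) _ ha.2
  have hne : T.Nonempty := by
    obtain ⟨a, ha, h1, h2⟩ := h.unit v
    exact ⟨a, ha, h1, h2⟩
  have hbdd : BddBelow T := ⟨0, fun x hx => hx.1.le⟩
  have hβ : ouNorm C e v = sInf T := rfl
  set β := sInf T with hβ'
  have hβ0 : 0 ≤ β := le_csInf hne fun x hx => hx.1.le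
  have hclosed : β • e - v ∈ C := by
    apply h.arch
    intro ε hε
    have heq : ε • e + (β • e - v) = (β + ε) • e - v := by module
    rw [heq]
    obtain ⟨a, haT, halt⟩ := exists_lt_of_csInf_lt hne (show sInf T < β + ε by linarith)
    exact ((hTiff _).mp (hup a haT _ halt.le)).2
  have hβpos : 0 < β := by
    rcases lt_or_eq_of_le hβ0 with hp | hp
    · exact hp
    · exfalso
      rw [← hp, zero_smul, zero_sub] at hclosed
      exact hv0 (h.proper v hv hclosed)
  rw [hβ]
  refine ⟨hβpos, fun a => ⟨?_, ?_⟩⟩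
  · intro ha
    rcases lt_or_ge 0 a with hpos | hneg
    · exact csInf_le hbdd ((hTiff a).mpr ⟨hpos, ha⟩)
    · exfalso
      have h1 : a • e ∈ C := by
        have := h.add_mem _ ha _ hv
        rwa [sub_add_cancel] at this
      have h2 : a = 0 := le_antisymm hneg ((OUS.te_mem_iff h he0).mp h1)
      rw [h2, zero_smul, zero_sub] at ha
      exact hv0 (h.proper v hv ha)
  · intro ha
    have heq : a • e - v = (a - β) • e + (β • e - v) := by module
    rw [heq]
    exact h.add_mem _ (h.smul_mem _ (by linarith) _ (OUS.e_mem h)) _ hclosed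

lemma OUS.norm_zero : ouNorm C e (0 : V) = 0 := by
  unfold ouNorm
  have hs : {a : ℝ | 0 < a ∧ a • e - 0 ∈ C ∧ a • e + 0 ∈ C} = Ioi 0 := by
    ext a
    simp only [sub_zero, add_zero, mem_setOf_eq, mem_Ioi]
    exact ⟨fun h' => h'.1, fun ha =>
      ⟨ha, h.smul_mem a ha.le _ (OUS.e_mem h), h.smul_mem a ha.le _ (OUS.e_mem h)⟩⟩
  rw [hs, csInf_Ioi]

end Aux

theorem ouNorm_line
    {V : Type*} [AddCommGroup V] [Module ℝ V] {C : Set V} {e : V}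
    (h : IsOrderUnitSpace C e) (hdim : 2 ≤ Module.rank ℝ V)
    {u : V} (hu : u ∈ C) (hu1 : ouNorm C e u = 1) (hue : u ≠ e) (l : ℝ) :
    ouNorm C e (e - l • (e - u)) = max 1 |l * ouNorm C e (e - u) - 1| := by
  have he0 : e ≠ 0 := OUS.e_ne_zero h hdim
  have hu0 : u ≠ 0 := by
    intro h0
    rw [h0, OUS.norm_zero h] at hu1
    norm_num at hu1
  obtain ⟨-, hiff_u⟩ := OUS.norm_spec h he0 hu hu0
  rw [hu1] at hiff_u
  have hw : e - u ∈ C := by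
    have := (hiff_u 1).mpr le_rfl
    rwa [one_smul] at this
  have hw0 : e - u ≠ 0 := sub_ne_zero.mpr (Ne.symm hue)
  obtain ⟨hβpos, hiff_w⟩ := OUS.norm_spec h he0 hw hw0
  set β := ouNorm C e (e - u) with hβ
  -- scaled characterizations
  have hiff_w' : ∀ c : ℝ, 0 < c → ∀ a : ℝ, a • e - c • (e - u) ∈ C ↔ c * β ≤ a := by
    intro c hc a
    have hca : c * (a / c) = a := mul_div_cancel₀ a hc.ne'
    have heq : a • e - c • (e - u) = c • ((a / c) • e - (e - u)) := by
      conv_rhs => rw [smul_sub, smul_smul, hca]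
    rw [heq, OUS.smul_mem_iff h hc, hiff_w, le_div_iff₀ hc]
    constructor <;> intro <;> nlinarith
  have hplus : ∀ s : ℝ, s • e + (e - u) ∈ C ↔ 0 ≤ s := by
    intro s
    have heq : s • e + (e - u) = (s + 1) • e - u := by module
    rw [heq, hiff_u]
    constructor <;> intro <;> linarith
  have hplus' : ∀ c : ℝ, 0 < c → ∀ a : ℝ, a • e + c • (e - u) ∈ C ↔ 0 ≤ a := by
    intro c hc a
    have hca : c * (a / c) = a := mul_div_cancel₀ a hc.ne'
    have heq : a • e + c • (e - u) = c • ((a / c) • e + (e - u)) := by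
      conv_rhs => rw [smul_add, smul_smul, hca]
    rw [heq, OUS.smul_mem_iff h hc, hplus, le_div_iff₀ hc, zero_mul]
  set M := max 1 |l * β - 1| with hM
  have hM1 : 1 ≤ M := le_max_left _ _
  have hset : {a : ℝ | 0 < a ∧ a • e - (e - l • (e - u)) ∈ C ∧ a • e + (e - l • (e - u)) ∈ C}
      = Ici M := by
    ext a
    simp only [mem_setOf_eq, mem_Ici]
    have e1 : a • e - (e - l • (e - u)) = (a - 1) • e + l • (e - u) := by module
    have e2 : a • e + (e - l • (e - u)) = (a + 1) • e - l • (e - u) := by module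
    rw [e1, e2]
    rcases lt_trichotomy l 0 with hl | hl | hl
    · -- l < 0
      have hM' : M = 1 - l * β := by
        rw [hM, abs_of_neg (show l * β - 1 < 0 by nlinarith),
          max_eq_right (show (1:ℝ) ≤ -(l * β - 1) by nlinarith)]
        ring
      have c1 : (a - 1) • e + l • (e - u) ∈ C ↔ 1 - l * β ≤ a := by
        have heq : (a - 1) • e + l • (e - u) = (a - 1) • e - (-l) • (e - u) := by module
        rw [heq, hiff_w' (-l) (by linarith)]
        constructor <;> intro <;> linarith
      have c2 : (a + 1) • e - l • (e - u) ∈ C ↔ -1 ≤ a := by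
        have heq : (a + 1) • e - l • (e - u) = (a + 1) • e + (-l) • (e - u) := by module
        rw [heq, hplus' (-l) (by linarith)]
        constructor <;> intro <;> linarith
      rw [c1, c2, hM']
      constructor
      · rintro ⟨-, h1, -⟩; exact h1
      · intro hge
        have hlb : (0:ℝ) < 1 - l * β := by nlinarith
        exact ⟨by linarith, hge, by linarith⟩
    · -- l = 0
      subst hl
      have hM' : M = 1 := by
        rw [hM]; norm_num
      have c1 : (a - 1) • e + (0:ℝ) • (e - u) ∈ C ↔ 1 ≤ a := by
        rw [zero_smul, add_zero, OUS.te_mem_iff h he0]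
        constructor <;> intro <;> linarith
      have c2 : (a + 1) • e - (0:ℝ) • (e - u) ∈ C ↔ -1 ≤ a := by
        rw [zero_smul, sub_zero, OUS.te_mem_iff h he0]
        constructor <;> intro <;> linarith
      rw [c1, c2, hM']
      constructor
      · rintro ⟨-, h1, -⟩; exact h1
      · intro hge; exact ⟨by linarith, hge, by linarith⟩
    · -- l > 0
      have hM' : M = max 1 (l * β - 1) := by
        rcases le_or_gt 1 (l * β) with hc | hc
        · rw [hM, abs_of_nonneg (by linarith)]
        · rw [hM, abs_of_neg (by linarith), max_eq_left (by nlinarith),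
            max_eq_left (by linarith)]
      have c1 : (a - 1) • e + l • (e - u) ∈ C ↔ 1 ≤ a := by
        rw [hplus' l hl]
        constructor <;> intro <;> linarith
      have c2 : (a + 1) • e - l • (e - u) ∈ C ↔ l * β - 1 ≤ a := by
        rw [hiff_w' l hl]
        constructor <;> intro <;> linarith
      rw [c1, c2, hM']
      constructor
      · rintro ⟨-, h1, h2⟩
        exact max_le h1 h2
      · intro hge
        have h1 : 1 ≤ a := le_trans (le_max_left _ _) hge
        exact ⟨by linarith, h1, le_trans (le_max_right _ _) hge⟩
  have : ouNorm C e (e - l • (e - u)) = sInf (Ici M) := by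
    unfold ouNorm
    rw [hset]
  rw [this, csInf_Ici]
end

section
/- Let (V, e) be an order unit space and let Bd(V⁺) be the norm boundary of V⁺ in V. Then {u ∈ V⁺ : ‖u‖ = 1 = ‖e − u‖ and e − u ∈ V⁺} = {u ∈ V⁺ : ‖u‖ = 1} ∩ Bd(V⁺). -/
open Set

section Aux
variable {V : Type*} [AddCommGroup V] [Module ℝ V] {C : Set V} {e : V}

private lemma ou_e_mem (h : IsOrderUnitSpace C e) : e ∈ C := by
  obtain ⟨a, ha, -, h2⟩ := h.unit e
  have h3 : (a + 1) • e ∈ C := by rwa [add_smul, one_smul]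
  have h4 := h.smul_mem (a + 1)⁻¹ (by positivity) _ h3
  rwa [smul_smul, inv_mul_cancel₀ (by positivity), one_smul] at h4

private lemma ou_set_nonempty (h : IsOrderUnitSpace C e) (v : V) :
    {a : ℝ | 0 < a ∧ a • e - v ∈ C ∧ a • e + v ∈ C}.Nonempty := by
  obtain ⟨a, ha, h1, h2⟩ := h.unit v
  exact ⟨a, ha, h1, h2⟩

private lemma ou_set_bdd (v : V) :
    BddBelow {a : ℝ | 0 < a ∧ a • e - v ∈ C ∧ a • e + v ∈ C} :=
  ⟨0, fun a ha => ha.1.le⟩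

private lemma ou_mem_le (h : IsOrderUnitSpace C e) {v : V} {a : ℝ}
    (ha : 0 < a) (h1 : a • e - v ∈ C) (h2 : a • e + v ∈ C) :
    ouNorm C e v ≤ a :=
  csInf_le (ou_set_bdd v) ⟨ha, h1, h2⟩

private lemma ou_gt_mem (h : IsOrderUnitSpace C e) {v : V} {a : ℝ}
    (hlt : ouNorm C e v < a) : a • e - v ∈ C ∧ a • e + v ∈ C := by
  obtain ⟨b, hb, hba⟩ := exists_lt_of_csInf_lt (ou_set_nonempty h v) hlt
  obtain ⟨hb0, hb1, hb2⟩ := hb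
  have he : (a - b) • e ∈ C := h.smul_mem _ (by linarith) _ (ou_e_mem h)
  constructor
  · have := h.add_mem _ he _ hb1
    rwa [show (a - b) • e + (b • e - v) = a • e - v by rw [sub_smul]; abel] at this
  · have := h.add_mem _ he _ hb2
    rwa [show (a - b) • e + (b • e + v) = a • e + v by rw [sub_smul]; abel] at this

private lemma ou_norm_smul_e_le (h : IsOrderUnitSpace C e) {a : ℝ} (ha : 0 < a) :
    ouNorm C e (a • e) ≤ a := by
  refine ou_mem_le h ha ?_ ?_
  · rw [sub_self]; exact h.zero_mem
  · rw [← add_smul]; exact h.smul_mem _ (by linarith) _ (ou_e_mem h)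

/-- If `u - δ • e ∈ C` then everything within `δ` of `u` is in `C`. -/
private lemma ou_interior (h : IsOrderUnitSpace C e) {u w : V} {δ : ℝ}
    (hu : u - δ • e ∈ C) (hw : ouNorm C e (u - w) < δ) : w ∈ C := by
  have h1 := (ou_gt_mem h hw).1
  have := h.add_mem _ hu _ h1
  rwa [show u - δ • e + (δ • e - (u - w)) = w by abel] at this

/-- From `‖u‖ = 1` and Archimedeanity, `e - u ∈ C`. -/
private lemma ou_sub_mem (h : IsOrderUnitSpace C e) {u : V}
    (hn : ouNorm C e u = 1) : e - u ∈ C := by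
  apply h.arch
  intro ε hε
  have h1 : ouNorm C e u < 1 + ε := by rw [hn]; linarith
  have := (ou_gt_mem h h1).1
  rwa [show (1 + ε : ℝ) • e - u = ε • e + (e - u) by rw [add_smul, one_smul]; abel] at this

end Aux

theorem periphery_eq_boundary
    {V : Type*} [AddCommGroup V] [Module ℝ V] {C : Set V} {e : V}
    (h : IsOrderUnitSpace C e) :
    {u ∈ C | ouNorm C e u = 1 ∧ ouNorm C e (e - u) = 1 ∧ e - u ∈ C} =
      {u ∈ C | ouNorm C e u = 1} ∩
        {v : V | (∀ ε : ℝ, 0 < ε → ∃ w ∈ C, ouNorm C e (v - w) < ε) ∧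
          (∀ ε : ℝ, 0 < ε → ∃ w ∉ C, ouNorm C e (v - w) < ε)} := by
  ext u
  simp only [mem_setOf_eq, mem_inter_iff, mem_sep_iff]
  constructor
  · rintro ⟨huC, hn, hn', hsub⟩
    refine ⟨⟨huC, hn⟩, ?_, ?_⟩
    · intro ε hε
      refine ⟨u, huC, ?_⟩
      have h0 : ouNorm C e (u - u) ≤ ε / 2 := by
        rw [sub_self]
        refine ou_mem_le h (by linarith) ?_ ?_ <;>
          simp only [sub_zero, add_zero] <;>
          exact h.smul_mem _ (by linarith) _ (ou_e_mem h)
      linarith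
    · intro ε hε
      set δ := min ε 1 / 2 with hδdef
      have hδ0 : 0 < δ := by positivity
      have hδε : δ < ε := by
        have := min_le_left ε 1; simp only [hδdef]; linarith [min_le_left ε (1:ℝ)]
      have hδ1 : δ < 1 := by
        have := min_le_right ε (1:ℝ); simp only [hδdef]; linarith
      refine ⟨u - δ • e, ?_, ?_⟩
      · -- u - δ • e ∉ C
        intro hmem
        -- then 1 - δ ∈ the set for e - u, contradicting ouNorm (e-u) = 1
        have h1 : (1 - δ) • e - (e - u) ∈ C := by
          rwa [show (1 - δ : ℝ) • e - (e - u) = u - δ • e by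
            rw [sub_smul, one_smul]; abel]
        have h2 : (1 - δ) • e + (e - u) ∈ C := by
          have := h.add_mem _ (h.smul_mem _ (by linarith : (0:ℝ) ≤ 1 - δ) _ (ou_e_mem h)) _ hsub
          exact this
        have := ou_mem_le h (by linarith) h1 h2
        rw [hn'] at this
        linarith
      · have : ouNorm C e (u - (u - δ • e)) ≤ δ := by
          rw [show u - (u - δ • e) = δ • e by abel]
          exact ou_norm_smul_e_le h hδ0
        linarith
  · rintro ⟨⟨huC, hn⟩, -, hbd⟩
    have hsub : e - u ∈ C := ou_sub_mem h hn
    refine ⟨huC, hn, ?_, hsub⟩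
    -- ouNorm (e - u) = 1
    have hle : ouNorm C e (e - u) ≤ 1 := by
      refine ou_mem_le h one_pos ?_ ?_
      · rwa [one_smul, show e - (e - u) = u by abel]
      · rw [one_smul]
        exact h.add_mem _ (ou_e_mem h) _ hsub
    have hge : 1 ≤ ouNorm C e (e - u) := by
      by_contra hlt
      push_neg at hlt
      obtain ⟨a, ha, ha1⟩ := exists_between hlt
      have h1 : a • e - (e - u) ∈ C := (ou_gt_mem h ha).1
      have h2 : u - (1 - a) • e ∈ C := by
        rwa [show u - (1 - a) • e = a • e - (e - u) by rw [sub_smul, one_smul]; abel]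
      have hδ : (0:ℝ) < 1 - a := by linarith
      obtain ⟨w, hwC, hwlt⟩ := hbd (1 - a) hδ
      exact hwC (ou_interior h h2 hwlt)
    linarith
end

section
/- Let (V, e) be an order unit space and let u, v be peripheral elements (i.e., u, v ∈ V⁺ with ‖u‖ = ‖e−u‖ = ‖v‖ = ‖e−v‖ = 1 and e−u, e−v ∈ V⁺) with u ≠ v. Then the following are equivalent: (1) some point strictly between u and v is peripheral; (2) there exist states f, g of V with f(u) = f(v) = 1 and g(u) = g(v) = 0; (3) the entire segment [u, v] consists of peripheral elements. -/
open Set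

/-
The functional `ouSup v = inf {a | a • e - v ∈ C}` is sublinear, so by Hahn–Banach some state
attains it at any given `v`; on `C` it dominates `ouNorm`, which in turn dominates every state.
Hence for `0 ≤ w ≤ e`, `‖w‖ = 1` iff some state takes the value `1` at `w`, and `w` is peripheral
iff some state is `1` and some state is `0` at `w`. States take values in `[0, 1]` on `[0, e]`, so
these extreme values at an interior point of `[u, v]` are forced at both endpoints; conversely,
states being affine, values shared by both endpoints persist along the segment.
-/

theorem exists_linearMap_le_sublinear_and_eq {E : Type*} [AddCommGroup E] [Module ℝ E]
    (N : E → ℝ) (N_hom : ∀ c : ℝ, 0 < c → ∀ x, N (c • x) = c * N x)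
    (N_add : ∀ x y, N (x + y) ≤ N x + N y) (x : E) :
    ∃ g : E →ₗ[ℝ] ℝ, (∀ y, g y ≤ N y) ∧ g x = N x := by
  have N_zero : N 0 = 0 := by
    have := N_hom 2 two_pos 0
    rw [smul_zero] at this
    linarith
  have N_smul_ge : ∀ c : ℝ, c * N x ≤ N (c • x) := by
    intro c
    rcases lt_trichotomy c 0 with hc | rfl | hc
    · have := N_add (c • x) ((-c) • x)
      rw [← add_smul, add_neg_cancel, zero_smul, N_zero, N_hom (-c) (by linarith)] at this
      linarith
    · simp [N_zero]
    · exact (N_hom c hc x).ge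
  let f : E →ₗ.[ℝ] ℝ := LinearPMap.mkSpanSingleton' x (N x) fun c hcx => by
    rcases smul_eq_zero.mp hcx with rfl | rfl
    · exact zero_smul ℝ _
    · rw [N_zero, smul_zero]
  obtain ⟨g, hgf, hgN⟩ := exists_extension_of_le_sublinear f N N_hom N_add <| by
    rintro ⟨y, hy⟩
    obtain ⟨c, rfl⟩ := Submodule.mem_span_singleton.mp hy
    rw [LinearPMap.mkSpanSingleton'_apply, smul_eq_mul]
    exact N_smul_ge c
  exact ⟨g, hgN, hgf ⟨x, Submodule.mem_span_singleton_self x⟩ |>.trans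
    (LinearPMap.mkSpanSingleton'_apply_self _ _ _ _)⟩

noncomputable def ouSup {V : Type*} [AddCommGroup V] [Module ℝ V] (C : Set V) (e : V) (v : V) :
    ℝ :=
  sInf {a : ℝ | a • e - v ∈ C}

namespace IsOrderUnitSpace

variable {V : Type*} [AddCommGroup V] [Module ℝ V] {C : Set V} {e : V}

theorem unit_mem (h : IsOrderUnitSpace C e) : e ∈ C := by
  obtain ⟨a, ha, -, hae⟩ := h.unit e
  have := h.smul_mem (a + 1)⁻¹ (by positivity) _ hae
  rwa [show a • e + e = (a + 1) • e by module, inv_smul_smul₀ (by positivity)] at this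

theorem smul_unit_mem (h : IsOrderUnitSpace C e) {c : ℝ} (hc : 0 ≤ c) : c • e ∈ C :=
  h.smul_mem c hc e h.unit_mem

theorem nonneg_of_smul_unit_mem (h : IsOrderUnitSpace C e) (he : e ≠ 0) {c : ℝ}
    (hc : c • e ∈ C) : 0 ≤ c := by
  by_contra! hneg
  have := h.proper _ hc (by rw [← neg_smul]; exact h.smul_unit_mem (by linarith))
  exact he ((smul_eq_zero.mp this).resolve_left hneg.ne)

theorem ne_zero_of_peripheral (h : IsOrderUnitSpace C e) {u : V} (hu : Peripheral C e u) :
    e ≠ 0 := by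
  rintro rfl
  obtain ⟨huC, hnegu, hnorm, -⟩ := hu
  obtain rfl : u = 0 := h.proper u huC (by rwa [zero_sub] at hnegu)
  have : {a : ℝ | 0 < a ∧ a • (0 : V) - 0 ∈ C ∧ a • (0 : V) + 0 ∈ C} = Ioi 0 := by
    ext a; simp [h.zero_mem]
  rw [ouNorm, this, csInf_Ioi] at hnorm
  exact zero_ne_one hnorm

theorem ouSup_le (h : IsOrderUnitSpace C e) (he : e ≠ 0) {v : V} {a : ℝ}
    (ha : a • e - v ∈ C) : ouSup C e v ≤ a := by
  refine csInf_le ?_ ha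
  obtain ⟨b, -, -, hb⟩ := h.unit v
  refine ⟨-b, fun c hc => ?_⟩
  have := h.nonneg_of_smul_unit_mem he (c := c + b) <| by
    rw [show (c + b) • e = (c • e - v) + (b • e + v) by module]
    exact h.add_mem _ hc _ hb
  linarith

theorem ouSup_smul_sub_mem (h : IsOrderUnitSpace C e) (v : V) : ouSup C e v • e - v ∈ C := by
  refine h.arch _ fun ε hε => ?_
  obtain ⟨a, ha, hlt⟩ : ∃ a ∈ {a : ℝ | a • e - v ∈ C}, a < ouSup C e v + ε := by
    obtain ⟨a, -, ha, -⟩ := h.unit v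
    exact exists_lt_of_csInf_lt ⟨a, ha⟩ (by unfold ouSup; linarith)
  rw [show ε • e + (ouSup C e v • e - v) = (ouSup C e v + ε - a) • e + (a • e - v) by module]
  exact h.add_mem _ (h.smul_unit_mem (by linarith)) _ ha

theorem ouSup_add_le (h : IsOrderUnitSpace C e) (he : e ≠ 0) (x y : V) :
    ouSup C e (x + y) ≤ ouSup C e x + ouSup C e y := by
  apply h.ouSup_le he
  rw [show (ouSup C e x + ouSup C e y) • e - (x + y)
    = (ouSup C e x • e - x) + (ouSup C e y • e - y) by module]
  exact h.add_mem _ (h.ouSup_smul_sub_mem x) _ (h.ouSup_smul_sub_mem y)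

theorem ouSup_smul_le (h : IsOrderUnitSpace C e) (he : e ≠ 0) {c : ℝ} (hc : 0 ≤ c) (x : V) :
    ouSup C e (c • x) ≤ c * ouSup C e x := by
  apply h.ouSup_le he
  rw [show (c * ouSup C e x) • e - c • x = c • (ouSup C e x • e - x) by module]
  exact h.smul_mem c hc _ (h.ouSup_smul_sub_mem x)

theorem ouSup_smul (h : IsOrderUnitSpace C e) (he : e ≠ 0) {c : ℝ} (hc : 0 < c) (x : V) :
    ouSup C e (c • x) = c * ouSup C e x := by
  refine le_antisymm (h.ouSup_smul_le he hc.le x) ?_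
  have := h.ouSup_smul_le he (inv_nonneg.mpr hc.le) (c • x)
  rw [inv_smul_smul₀ hc.ne'] at this
  exact (le_inv_mul_iff₀ hc).mp this

theorem exists_state_apply_eq_ouSup (h : IsOrderUnitSpace C e) (he : e ≠ 0) (w : V) :
    ∃ f : V →ₗ[ℝ] ℝ, IsState C e f ∧ f w = ouSup C e w := by
  obtain ⟨f, hf, hfw⟩ := exists_linearMap_le_sublinear_and_eq (ouSup C e)
    (fun c hc x => h.ouSup_smul he hc x) (h.ouSup_add_le he) w
  refine ⟨f, ⟨fun x hx => ?_, le_antisymm ?_ ?_⟩, hfw⟩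
  · have := (hf (-x)).trans (h.ouSup_le he (a := 0) (by simpa using hx))
    rw [map_neg] at this
    linarith
  · exact (hf e).trans (h.ouSup_le he (by simpa using h.zero_mem))
  · have := (hf (-e)).trans (h.ouSup_le he (a := -1) (by simpa using h.zero_mem))
    rw [map_neg] at this
    linarith

theorem apply_le_ouNorm (h : IsOrderUnitSpace C e) {f : V →ₗ[ℝ] ℝ} (hf : IsState C e f)
    (w : V) : f w ≤ ouNorm C e w := by
  obtain ⟨a, ha⟩ := h.unit w
  refine le_csInf ⟨a, ha⟩ fun b hb => ?_
  have := hf.1 _ hb.2.1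
  rw [map_sub, map_smul, hf.2, smul_eq_mul, mul_one] at this
  linarith

theorem ouNorm_le_ouSup (h : IsOrderUnitSpace C e) (he : e ≠ 0) {w : V} (hw : w ∈ C) :
    ouNorm C e w ≤ ouSup C e w := by
  have ouSup_nonneg : 0 ≤ ouSup C e w := h.nonneg_of_smul_unit_mem he <| by
    simpa using h.add_mem _ (h.ouSup_smul_sub_mem w) _ hw
  refine le_of_forall_gt_imp_ge_of_dense fun a ha => csInf_le ⟨0, fun b hb => hb.1.le⟩
    ⟨by linarith, ?_, h.add_mem _ (h.smul_unit_mem (by linarith)) _ hw⟩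
  rw [show a • e - w = (a - ouSup C e w) • e + (ouSup C e w • e - w) by module]
  exact h.add_mem _ (h.smul_unit_mem (by linarith)) _ (h.ouSup_smul_sub_mem w)

theorem ouNorm_eq_one_iff (h : IsOrderUnitSpace C e) (he : e ≠ 0) {w : V} (hw : w ∈ C)
    (hew : e - w ∈ C) : ouNorm C e w = 1 ↔ ∃ f : V →ₗ[ℝ] ℝ, IsState C e f ∧ f w = 1 := by
  have le_one_of_state : ∀ f : V →ₗ[ℝ] ℝ, IsState C e f → f w ≤ 1 := fun f hf => by
    have := hf.1 _ hew
    rw [map_sub, hf.2] at this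
    linarith
  have ouNorm_le_one : ouNorm C e w ≤ 1 :=
    csInf_le ⟨0, fun b hb => hb.1.le⟩ ⟨one_pos, by rwa [one_smul], by
      simpa using h.add_mem _ h.unit_mem _ hw⟩
  constructor
  · intro hnorm
    obtain ⟨f, hf, hfw⟩ := h.exists_state_apply_eq_ouSup he w
    refine ⟨f, hf, le_antisymm (le_one_of_state f hf) ?_⟩
    rw [hfw, ← hnorm]
    exact h.ouNorm_le_ouSup he hw
  · rintro ⟨f, hf, hfw⟩
    exact le_antisymm ouNorm_le_one (hfw ▸ h.apply_le_ouNorm hf w)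

theorem peripheral_iff (h : IsOrderUnitSpace C e) (he : e ≠ 0) {w : V} (hw : w ∈ C)
    (hew : e - w ∈ C) :
    Peripheral C e w ↔ (∃ f : V →ₗ[ℝ] ℝ, IsState C e f ∧ f w = 1) ∧
      ∃ g : V →ₗ[ℝ] ℝ, IsState C e g ∧ g w = 0 := by
  have state_apply_sub : ∀ g : V →ₗ[ℝ] ℝ, IsState C e g → (g (e - w) = 1 ↔ g w = 0) :=
    fun g hg => by rw [map_sub, hg.2, sub_eq_self]
  rw [Peripheral, h.ouNorm_eq_one_iff he hw hew,
    h.ouNorm_eq_one_iff he hew (by rwa [sub_sub_cancel])]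
  simp only [hw, hew, true_and]
  exact and_congr_right' (exists_congr fun g => and_congr_right (state_apply_sub g))

theorem exists_states_of_peripheral_mem_openSegment (h : IsOrderUnitSpace C e) {u v x : V}
    (hu : u ∈ C) (hv : v ∈ C) (hue : e - u ∈ C) (hve : e - v ∈ C)
    (hx : x ∈ openSegment ℝ u v) (hxp : Peripheral C e x) :
    ∃ f g : V →ₗ[ℝ] ℝ, IsState C e f ∧ IsState C e g ∧
      f u = 1 ∧ f v = 1 ∧ g u = 0 ∧ g v = 0 := by
  obtain ⟨⟨f, hf, hfx⟩, g, hg, hgx⟩ :=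
    (h.peripheral_iff (h.ne_zero_of_peripheral hxp) hxp.1 hxp.2.1).mp hxp
  obtain ⟨a, b, ha, hb, hab, rfl⟩ := hx
  have hfu := hf.1 _ hue
  have hfv := hf.1 _ hve
  have hgu := hg.1 _ hu
  have hgv := hg.1 _ hv
  simp only [map_add, map_sub, map_smul, smul_eq_mul, hf.2] at hfx hgx hfu hfv
  refine ⟨f, g, hf, hg, ?_, ?_, ?_, ?_⟩ <;> nlinarith

theorem peripheral_of_mem_segment (h : IsOrderUnitSpace C e) {u v x : V}
    (hu : u ∈ C) (hv : v ∈ C) (hue : e - u ∈ C) (hve : e - v ∈ C) {f g : V →ₗ[ℝ] ℝ}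
    (hf : IsState C e f) (hg : IsState C e g) (hfu : f u = 1) (hfv : f v = 1) (hgu : g u = 0)
    (hgv : g v = 0) (hx : x ∈ segment ℝ u v) : Peripheral C e x := by
  obtain ⟨a, b, ha, hb, hab, rfl⟩ := hx
  have he : e ≠ 0 := fun he => by simpa [he] using hf.2
  have hxC : a • u + b • v ∈ C := h.add_mem _ (h.smul_mem a ha _ hu) _ (h.smul_mem b hb _ hv)
  have hexC : e - (a • u + b • v) ∈ C := by
    rw [show e - (a • u + b • v) = a • (e - u) + b • (e - v) by
      linear_combination (norm := module) -hab • e]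
    exact h.add_mem _ (h.smul_mem a ha _ hue) _ (h.smul_mem b hb _ hve)
  refine (h.peripheral_iff he hxC hexC).mpr ⟨⟨f, hf, ?_⟩, g, hg, ?_⟩
  · simp [hfu, hfv, hab]
  · simp [hgu, hgv]

end IsOrderUnitSpace

theorem peripheral_segment_tfae_general
    {V : Type*} [AddCommGroup V] [Module ℝ V] {C : Set V} {e : V}
    (h : IsOrderUnitSpace C e) {u v : V}
    (hu : Peripheral C e u) (hv : Peripheral C e v) :
    ((∃ t : ℝ, 0 < t ∧ t < 1 ∧ Peripheral C e ((1 - t) • u + t • v)) ↔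
      ∃ f g : V →ₗ[ℝ] ℝ, IsState C e f ∧ IsState C e g ∧
        f u = 1 ∧ f v = 1 ∧ g u = 0 ∧ g v = 0) ∧
    ((∃ t : ℝ, 0 < t ∧ t < 1 ∧ Peripheral C e ((1 - t) • u + t • v)) ↔
      ∀ x ∈ segment ℝ u v, Peripheral C e x) := by
  have one_two : (∃ t : ℝ, 0 < t ∧ t < 1 ∧ Peripheral C e ((1 - t) • u + t • v)) →
      ∃ f g : V →ₗ[ℝ] ℝ, IsState C e f ∧ IsState C e g ∧
        f u = 1 ∧ f v = 1 ∧ g u = 0 ∧ g v = 0 := fun ⟨t, ht₀, ht₁, hx⟩ =>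
    h.exists_states_of_peripheral_mem_openSegment hu.1 hv.1 hu.2.1 hv.2.1
      ⟨1 - t, t, by linarith, ht₀, by ring, rfl⟩ hx
  have two_three : (∃ f g : V →ₗ[ℝ] ℝ, IsState C e f ∧ IsState C e g ∧
      f u = 1 ∧ f v = 1 ∧ g u = 0 ∧ g v = 0) → ∀ x ∈ segment ℝ u v, Peripheral C e x :=
    fun ⟨_, _, hf, hg, hfu, hfv, hgu, hgv⟩ _ hx =>
      h.peripheral_of_mem_segment hu.1 hv.1 hu.2.1 hv.2.1 hf hg hfu hfv hgu hgv hx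
  have three_one : (∀ x ∈ segment ℝ u v, Peripheral C e x) →
      ∃ t : ℝ, 0 < t ∧ t < 1 ∧ Peripheral C e ((1 - t) • u + t • v) := fun hseg =>
    ⟨1 / 2, by norm_num, by norm_num,
      hseg _ ⟨_, _, by norm_num, by norm_num, by norm_num, rfl⟩⟩
  exact ⟨⟨one_two, three_one ∘ two_three⟩, two_three ∘ one_two, three_one⟩

theorem peripheral_segment_tfae
    {V : Type*} [AddCommGroup V] [Module ℝ V] {C : Set V} {e : V}
    (h : IsOrderUnitSpace C e) {u v : V}
    (hu : Peripheral C e u) (hv : Peripheral C e v) (huv : u ≠ v) :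
    ((∃ t : ℝ, 0 < t ∧ t < 1 ∧ Peripheral C e ((1 - t) • u + t • v)) ↔
      ∃ f g : V →ₗ[ℝ] ℝ, IsState C e f ∧ IsState C e g ∧
        f u = 1 ∧ f v = 1 ∧ g u = 0 ∧ g v = 0) ∧
    ((∃ t : ℝ, 0 < t ∧ t < 1 ∧ Peripheral C e ((1 - t) • u + t • v)) ↔
      ∀ x ∈ segment ℝ u v, Peripheral C e x) :=
  peripheral_segment_tfae_general h hu hv
end

section
/- Let (V, e) be an order unit space of dimension at least 2 and let u ∈ V⁺ be a peripheral element (‖u‖ = ‖e−u‖ = 1 and e − u ∈ V⁺). Then the subspace P_u = {αe + βu : α, β ∈ ℝ} is unitally order isomorphic to ℓ∞², via the map αe + βu ↦ (α, α+β); moreover this map is an isometry. -/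
open Set

/-!
Writing `a • e + b • u = a • (e - u) + (a + b) • u` shows that `a • e + b • u` is positive when
`a, a + b ≥ 0`. Conversely, if `a • e + b • u` is positive but `a + b < 0`, a positive rescaling
(or adding a multiple of `e - u`) produces `t • e - u ≥ 0` with `t < 1`, forcing `‖u‖ ≤ t < 1`;
the condition `a ≥ 0` is the same statement for the peripheral element `e - u`, since
`a • e + b • u = (a + b) • e + (-b) • (e - u)`. With the cone known, `c • e ± (a • e + b • u) ≥ 0`
holds exactly when `max |a| |a + b| ≤ c`, which computes the order unit norm.
-/

theorem csInf_Ioi_zero_inter_Ici {M : ℝ} (hM : 0 ≤ M) : sInf (Ioi 0 ∩ Ici M) = M := by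
  rcases hM.eq_or_lt with rfl | hM
  · rw [inter_eq_left.2 Ioi_subset_Ici_self, csInf_Ioi]
  · rw [inter_eq_right.2 (Ici_subset_Ioi.2 hM), csInf_Ici]

namespace IsOrderUnitSpace

variable {V : Type*} [AddCommGroup V] [Module ℝ V] {C : Set V} {e : V}

theorem eq_zero_of_unit_eq_zero (h : IsOrderUnitSpace C e) (he : e = 0) (v : V) : v = 0 := by
  obtain ⟨a, -, hneg, hpos⟩ := h.unit v
  simp only [he, smul_zero, zero_sub, zero_add] at hneg hpos
  exact h.proper v hpos hneg

theorem nonneg_of_smul_mem (h : IsOrderUnitSpace C e) {v : V} {r : ℝ} (hv : v ∈ C) (hv0 : v ≠ 0)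
    (hrv : r • v ∈ C) : 0 ≤ r := by
  by_contra! hr
  have hneg : -(r • v) ∈ C := by simpa using h.smul_mem (-r) (by linarith) v hv
  rcases smul_eq_zero.1 (h.proper _ hrv hneg) with hr0 | hv'
  exacts [hr.ne hr0, hv0 hv']

theorem ouNorm_zero (h : IsOrderUnitSpace C e) : ouNorm C e 0 = 0 := by
  have hset : {a : ℝ | 0 < a ∧ a • e - 0 ∈ C ∧ a • e + 0 ∈ C} = Ioi 0 := by
    ext a
    simp only [sub_zero, add_zero, mem_ofPred_eq, mem_Ioi]
    exact ⟨And.left, fun ha => ⟨ha, h.smul_mem a ha.le e h.unit_mem, h.smul_mem a ha.le e h.unit_mem⟩⟩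
  rw [ouNorm, hset, csInf_Ioi]

theorem ouNorm_le_of_smul_sub_mem (h : IsOrderUnitSpace C e) (he0 : e ≠ 0) {w : V} {t : ℝ}
    (hw : w ∈ C) (htw : t • e - w ∈ C) : ouNorm C e w ≤ t := by
  have ht : 0 ≤ t := h.nonneg_of_smul_mem h.unit_mem he0 (by simpa using h.add_mem _ htw _ hw)
  rcases ht.eq_or_lt with rfl | ht
  · rw [zero_smul, zero_sub] at htw
    rw [h.proper w hw htw, h.ouNorm_zero]
  · exact csInf_le ⟨0, fun a ha => ha.1.le⟩
      ⟨ht, htw, h.add_mem _ (h.smul_mem t ht.le e h.unit_mem) _ hw⟩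

theorem add_nonneg_of_smul_add_smul_mem (h : IsOrderUnitSpace C e) {u : V} (hu : u ∈ C)
    (heu : e - u ∈ C) (hnorm : ouNorm C e u = 1) {a b : ℝ} (hx : a • e + b • u ∈ C) :
    0 ≤ a + b := by
  have he0 : e ≠ 0 := fun he => by
    rw [h.eq_zero_of_unit_eq_zero he u, h.ouNorm_zero] at hnorm
    exact zero_ne_one hnorm
  by_contra! hab
  obtain ⟨t, ht1, hte⟩ : ∃ t : ℝ, t < 1 ∧ t • e - u ∈ C := by
    rcases lt_or_ge b 0 with hb | hb
    · have hb0 : b ≠ 0 := hb.ne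
      refine ⟨a / -b, (div_lt_one (by linarith)).2 (by linarith), ?_⟩
      convert h.smul_mem (-b)⁻¹ (inv_nonneg.2 (by linarith)) _ hx using 1
      match_scalars <;> field_simp
    · have hau : (a + b) • u ∈ C := by
        convert h.add_mem _ hx _ (h.smul_mem (-a) (by linarith) _ heu) using 1
        module
      have hab0 : a + b ≠ 0 := hab.ne
      refine ⟨0, one_pos, ?_⟩
      convert h.smul_mem (-(a + b))⁻¹ (inv_nonneg.2 (by linarith)) _ hau using 1
      match_scalars <;> field_simp
  linarith [h.ouNorm_le_of_smul_sub_mem he0 hu hte]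

end IsOrderUnitSpace

namespace Peripheral

variable {V : Type*} [AddCommGroup V] [Module ℝ V] {C : Set V} {e u : V}

theorem smul_add_smul_mem_iff (hu : Peripheral C e u) (h : IsOrderUnitSpace C e) (a b : ℝ) :
    a • e + b • u ∈ C ↔ 0 ≤ a ∧ 0 ≤ a + b := by
  obtain ⟨huC, heuC, hnu, hneu⟩ := hu
  constructor
  · intro hx
    refine ⟨?_, h.add_nonneg_of_smul_add_smul_mem huC heuC hnu hx⟩
    have hx' : (a + b) • e + (-b) • (e - u) ∈ C := by
      convert hx using 1
      module
    simpa using h.add_nonneg_of_smul_add_smul_mem heuC (by simpa using huC) hneu hx'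
  · rintro ⟨ha, hab⟩
    convert h.add_mem _ (h.smul_mem a ha _ heuC) _ (h.smul_mem (a + b) hab u huC) using 1
    module

theorem eq_of_smul_add_smul_eq (hu : Peripheral C e u) (h : IsOrderUnitSpace C e)
    {a b a' b' : ℝ} (heq : a • e + b • u = a' • e + b' • u) : a = a' ∧ b = b' := by
  have hd : (a - a') • e + (b - b') • u = 0 := by
    rw [← sub_eq_zero.2 heq]
    module
  have hpos : (a - a') • e + (b - b') • u ∈ C := hd ▸ h.zero_mem
  have hneg : (a' - a) • e + (b' - b) • u ∈ C := by
    convert h.zero_mem using 1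
    rw [← neg_zero, ← hd]
    module
  rw [hu.smul_add_smul_mem_iff h] at hpos hneg
  constructor <;> linarith [hpos.1, hpos.2, hneg.1, hneg.2]

theorem ouNorm_smul_add_smul (hu : Peripheral C e u) (h : IsOrderUnitSpace C e) (a b : ℝ) :
    ouNorm C e (a • e + b • u) = max |a| |a + b| := by
  have hset : {c : ℝ | 0 < c ∧ c • e - (a • e + b • u) ∈ C ∧ c • e + (a • e + b • u) ∈ C} =
      Ioi 0 ∩ Ici (max |a| |a + b|) := by
    ext c
    rw [mem_ofPred_eq, show c • e - (a • e + b • u) = (c - a) • e + (-b) • u by module,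
      show c • e + (a • e + b • u) = (c + a) • e + b • u by module]
    simp only [hu.smul_add_smul_mem_iff h, mem_inter_iff, mem_Ioi, mem_Ici,
      max_le_iff, abs_le]
    constructor <;> intro hc <;> refine ⟨hc.1, ?_, ?_⟩ <;> constructor <;> linarith [hc.2]
  rw [ouNorm, hset, csInf_Ioi_zero_inter_Ici (by positivity)]

end Peripheral

theorem span_head_peripheral_iso_linfty2_general
    {V : Type*} [AddCommGroup V] [Module ℝ V] {C : Set V} {e : V}
    (h : IsOrderUnitSpace C e)
    {u : V} (hu : Peripheral C e u) :
    (∀ a b a' b' : ℝ, a • e + b • u = a' • e + b' • u → a = a' ∧ b = b') ∧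
    (∀ a b : ℝ, a • e + b • u ∈ C ↔ 0 ≤ a ∧ 0 ≤ a + b) ∧
    (∀ a b : ℝ, ouNorm C e (a • e + b • u) = max |a| |a + b|) :=
  ⟨fun _ _ _ _ => hu.eq_of_smul_add_smul_eq h, hu.smul_add_smul_mem_iff h,
    hu.ouNorm_smul_add_smul h⟩

theorem span_head_peripheral_iso_linfty2
    {V : Type*} [AddCommGroup V] [Module ℝ V] {C : Set V} {e : V}
    (h : IsOrderUnitSpace C e) (hdim : 2 ≤ Module.rank ℝ V)
    {u : V} (hu : Peripheral C e u) :
    (∀ a b a' b' : ℝ, a • e + b • u = a' • e + b' • u → a = a' ∧ b = b') ∧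
    (∀ a b : ℝ, a • e + b • u ∈ C ↔ 0 ≤ a ∧ 0 ≤ a + b) ∧
    (∀ a b : ℝ, ouNorm C e (a • e + b • u) = max |a| |a + b|) :=
  span_head_peripheral_iso_linfty2_general h hu
end
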